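/- arXiv:1512.05504 — 12 statements merged into one kernel-verified Lean document; each statement's English description precedes it below -/
import Mathlib

section
/- Let w be metric weights on a finite set S, and consider the complete graph on S. If the edge {x,y} is undominated in this complete graph, then for every pair of distinct points a,b ∈ S one has w(x,y) ≥ (1/2)·w(a,b). In particular, any two undominated edges have weights within a factor 2 of each other. -/
/-- If `{x,y}` is an undominated edge in the complete graph on a finite
set `S` with metric weights `w`, then `w x y ≥ (1/2) · w a b` for every pair of
distinct points `a b ∈ S`. -/
theorem stmt_0 {S : Type*} [Fintype S]
    (w : S → S → ℝ)
    (hnonneg : ∀ x y : S, 0 ≤ w x y)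
    (hsymm : ∀ x y : S, w x y = w y x)
    (hmetric : ∀ x y z : S, x ≠ y → y ≠ z → x ≠ z → w x y ≤ w x z + w z y)
    (x y : S) (hxy : x ≠ y)
    (hundx : ∀ a : S, a ≠ x → w x a ≤ w x y)
    (hundy : ∀ b : S, b ≠ y → w y b ≤ w x y) :
    ∀ a b : S, a ≠ b → (1 / 2) * w a b ≤ w x y := by
  intro a b hab
  have key : w a b ≤ 2 * w x y := by
    by_cases ha : a = x
    · have hbx : b ≠ x := fun h => hab (ha.trans h.symm)
      have := hundx b hbx
      rw [ha]
      nlinarith [hnonneg x y]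
    · by_cases hb : b = x
      · have := hundx a ha
        rw [hb, hsymm a x]
        nlinarith [hnonneg x y]
      · have h1 : w a b ≤ w a x + w x b :=
          hmetric a b x hab hb ha
        have h2 : w a x ≤ w x y := by rw [hsymm]; exact hundx a ha
        have h3 : w x b ≤ w x y := hundx b hb
        linarith
  linarith
end

section
/- Let w be metric weights on a finite set 𝒩 of N points, let e_1,…,e_k be a greedy sequence of k edges on 𝒩, let M denote the matching {e_1,…,e_k}, and let M* be any matching on 𝒩 with k* edges. Write α = 2k/N and α* = 2k*/N. Then: (1) if α + α* < 1, then w(M*) ≤ max(2, 2α*/α)·w(M); and (2) if α + α* ≥ 1, then w(M*) ≤ max(2, (α*+1)/α − 1)·w(M). Equivalently, in case (1) w(M*) ≤ max(2, 2k*/k)·w(M), and in case (2) w(M*) ≤ max(2, (2k* + N)/(2k) − 1)·w(M). -/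
/-- A matching given as a list of `k` edges: each edge has distinct endpoints and
different edges are vertex-disjoint. -/
def IsMatching {V : Type*} {k : ℕ} (f : Fin k → V × V) : Prop :=
  (∀ i, (f i).1 ≠ (f i).2) ∧
  ∀ i j, i ≠ j →
    (f i).1 ≠ (f j).1 ∧ (f i).1 ≠ (f j).2 ∧ (f i).2 ≠ (f j).1 ∧ (f i).2 ≠ (f j).2

/-- The weight of a matching: the sum of the weights of its edges. -/
def mWeight {V : Type*} {k : ℕ} (w : V → V → ℝ) (f : Fin k → V × V) : ℝ :=
  ∑ i, w (f i).1 (f i).2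

/-- A greedy sequence of `k` edges: a matching such that each edge `f i` is undominated
among the points not covered by the earlier edges, i.e. `w (f i) ≥ w (x,y)` for every
edge `(x,y)` on the remaining points sharing an endpoint with `f i`. -/
def IsGreedySeq {V : Type*} {k : ℕ} (w : V → V → ℝ) (f : Fin k → V × V) : Prop :=
  IsMatching f ∧
  ∀ i : Fin k, ∀ x y : V, x ≠ y →
    (∀ j, j < i → x ≠ (f j).1 ∧ x ≠ (f j).2) →
    (∀ j, j < i → y ≠ (f j).1 ∧ y ≠ (f j).2) →
    (x = (f i).1 ∨ x = (f i).2 ∨ y = (f i).1 ∨ y = (f i).2) →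
    w x y ≤ w (f i).1 (f i).2

/-! Charge each edge of `M*` to the first greedy edge it touches. That greedy edge was undominated
when it was chosen, and the `M*`-edge was still available then, so the charge does not exceed
its weight; each greedy edge is charged at most twice. An edge of `M*` touching no greedy edge
weighs at most twice any greedy edge (triangle inequality through one of its endpoints), and the
`F` such edges avoid the `2k` greedy endpoints, so `2F + 2k ≤ N`. Hence `w(M*) ≤ t · w(M)`
whenever `t ≥ 2` and `k* + F ≤ t k`, and both bounds are instances of this. -/

open Finset

theorem sum_le_mul_sum_of_charge {ι κ : Type*} [Fintype ι] [Fintype κ] [DecidableEq κ]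
    (a : ι → ℝ) (b : κ → ℝ) (ch : ι → Option κ) {μ t : ℝ} (hμ : 0 ≤ μ) (hμb : ∀ i, μ ≤ b i)
    (ha_none : ∀ j, ch j = none → a j ≤ 2 * μ) (ha_some : ∀ j i, ch j = some i → a j ≤ b i)
    (hfiber : ∀ i, #{j | ch j = some i} ≤ 2) (ht : 2 ≤ t)
    (hcard : Fintype.card ι + #{j | ch j = none} ≤ t * Fintype.card κ) :
    ∑ j, a j ≤ t * ∑ i, b i := by
  set n : Option κ → ℕ := fun o => #{j | ch j = o}
  have hsum : ∑ j, a j ≤ n none * (2 * μ) + ∑ i, n (some i) * b i := by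
    rw [← sum_fiberwise univ ch a, Fintype.sum_option]
    gcongr with i
    · simpa using sum_le_card_nsmul _ _ _ fun j hj => ha_none j (mem_filter.1 hj).2
    · simpa using sum_le_card_nsmul _ _ _ fun j hj => ha_some j i (mem_filter.1 hj).2
  have hcount : (Fintype.card ι : ℝ) = n none + ∑ i, (n (some i) : ℝ) := by
    rw [← card_univ, card_eq_sum_card_fiberwise (fun j _ => mem_univ (ch j)), Fintype.sum_option]
    push_cast
    rfl
  -- the unused capacity `(t - nᵢ) bᵢ ≥ (t - nᵢ) μ` of the greedy edges pays for the free edges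
  have hslack (i : κ) : n (some i) * b i + (t - n (some i)) * μ ≤ t * b i := by
    have hni : (n (some i) : ℝ) ≤ 2 := by exact_mod_cast hfiber i
    nlinarith [hμb i]
  have htotal := sum_le_sum fun i (_ : i ∈ univ) => hslack i
  rw [sum_add_distrib, ← sum_mul, sum_sub_distrib, sum_const, card_univ, nsmul_eq_mul,
    ← mul_sum] at htotal
  have hfree : 2 * (n none : ℝ) * μ ≤ (Fintype.card κ * t - ∑ i, (n (some i) : ℝ)) * μ := by
    gcongr
    linarith
  linarith

section Matching

variable {V : Type*} {k m : ℕ} {w : V → V → ℝ} {f : Fin k → V × V} {g : Fin m → V × V}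

def Touches (e e' : V × V) : Prop :=
  e.1 = e'.1 ∨ e.1 = e'.2 ∨ e.2 = e'.1 ∨ e.2 = e'.2

instance [DecidableEq V] (e e' : V × V) : Decidable (Touches e e') :=
  inferInstanceAs (Decidable (_ ∨ _))

theorem IsMatching.eq_of_mem {x : V} (hg : IsMatching g) {i j : Fin m}
    (hi : (g i).1 = x ∨ (g i).2 = x) (hj : (g j).1 = x ∨ (g j).2 = x) : i = j := by
  by_contra hij
  have := hg.2 i j hij
  rcases hi with rfl | rfl <;> tauto

theorem IsMatching.card_touches_le_two [DecidableEq V] (hg : IsMatching g) (e : V × V) :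
    #{j | Touches (g j) e} ≤ 2 := by
  have hcover (x : V) : #{j | (g j).1 = x ∨ (g j).2 = x} ≤ 1 :=
    card_le_one.2 fun i hi j hj => hg.eq_of_mem (mem_filter.1 hi).2 (mem_filter.1 hj).2
  calc #{j | Touches (g j) e}
      ≤ #(({j | (g j).1 = e.1 ∨ (g j).2 = e.1} : Finset (Fin m)) ∪
          ({j | (g j).1 = e.2 ∨ (g j).2 = e.2} : Finset (Fin m))) :=
        card_le_card fun j hj => by
          simp only [mem_filter, mem_union, mem_univ, true_and] at hj ⊢
          unfold Touches at hj
          tauto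
    _ ≤ 1 + 1 := (card_union_le _ _).trans (add_le_add (hcover _) (hcover _))

theorem IsMatching.card_biUnion_endpoints [DecidableEq V] (hg : IsMatching g) (s : Finset (Fin m)) :
    #(s.biUnion fun j => {(g j).1, (g j).2}) = 2 * #s := by
  rw [card_biUnion, sum_congr rfl fun j _ => card_pair (hg.1 j), sum_const, smul_eq_mul, mul_comm]
  intro i _ j _ hij
  have := hg.2 i j hij
  simp only [Function.onFun, disjoint_insert_left, disjoint_insert_right, disjoint_singleton,
    mem_insert, mem_singleton]
  tauto

variable [DecidableEq V]

def firstTouch (f : Fin k → V × V) (e : V × V) : Option (Fin k) :=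
  if h : ∃ i, Touches e (f i) then some (Fin.find _ h) else none

theorem firstTouch_eq_none {e : V × V} : firstTouch f e = none ↔ ∀ i, ¬ Touches e (f i) := by
  unfold firstTouch
  split_ifs with h <;> simpa using h

theorem firstTouch_eq_some {e : V × V} {i : Fin k} (h : firstTouch f e = some i) :
    Touches e (f i) ∧ ∀ j < i, ¬ Touches e (f j) := by
  unfold firstTouch at h
  split_ifs at h with hex
  cases h
  exact ⟨Fin.find_spec hex, fun j => Fin.find_min hex⟩

theorem IsGreedySeq.le_of_firstTouch_eq_some (hf : IsGreedySeq w f) {e : V × V} (he : e.1 ≠ e.2)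
    {i : Fin k} (h : firstTouch f e = some i) : w e.1 e.2 ≤ w (f i).1 (f i).2 := by
  obtain ⟨htouch, hprev⟩ := firstTouch_eq_some h
  refine hf.2 i e.1 e.2 he (fun j hj => ?_) (fun j hj => ?_) htouch <;>
  · have := hprev j hj
    simp only [Touches, not_or] at this
    tauto

theorem IsGreedySeq.le_two_mul_of_firstTouch_eq_none (hf : IsGreedySeq w f)
    (hmetric : ∀ x y z, x ≠ y → y ≠ z → x ≠ z → w x y ≤ w x z + w z y) {e : V × V} (he : e.1 ≠ e.2)
    (h : firstTouch f e = none) (i : Fin k) : w e.1 e.2 ≤ 2 * w (f i).1 (f i).2 := by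
  have hfree (j : Fin k) : e.1 ≠ (f j).1 ∧ e.1 ≠ (f j).2 ∧ e.2 ≠ (f j).1 ∧ e.2 ≠ (f j).2 := by
    simpa only [Touches, not_or] using firstTouch_eq_none.1 h j
  have hfst (j : Fin k) (hj : j < i) : (f i).1 ≠ (f j).1 ∧ (f i).1 ≠ (f j).2 :=
    ⟨(hf.1.2 i j hj.ne').1, (hf.1.2 i j hj.ne').2.1⟩
  -- the triangle inequality through the endpoint `(f i).1`, each half being dominated by `f i`
  calc w e.1 e.2 ≤ w e.1 (f i).1 + w (f i).1 e.2 :=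
        hmetric _ _ _ he (hfree i).2.2.1 (hfree i).1
    _ ≤ w (f i).1 (f i).2 + w (f i).1 (f i).2 := by
        gcongr
        · exact hf.2 i _ _ (hfree i).1 (fun j _ => ⟨(hfree j).1, (hfree j).2.1⟩) hfst
            (Or.inr (Or.inr (Or.inl rfl)))
        · exact hf.2 i _ _ (hfree i).2.2.1.symm hfst (fun j _ => ⟨(hfree j).2.2.1, (hfree j).2.2.2⟩)
            (Or.inl rfl)
    _ = 2 * w (f i).1 (f i).2 := (two_mul _).symm

theorem IsMatching.two_mul_card_untouched_add_two_mul_le [Fintype V] (hf : IsMatching f)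
    (hg : IsMatching g) : 2 * #{j | firstTouch f (g j) = none} + 2 * k ≤ Fintype.card V := by
  set S := ({j | firstTouch f (g j) = none} : Finset (Fin m))
  have hdisj : Disjoint (S.biUnion fun j => {(g j).1, (g j).2})
      (univ.biUnion fun i => {(f i).1, (f i).2}) := by
    simp only [disjoint_left, mem_biUnion, mem_insert, mem_singleton, mem_univ, true_and,
      not_exists, not_or]
    rintro x ⟨j, hj, hx⟩ i
    have := firstTouch_eq_none.1 (mem_filter.1 hj).2 i
    simp only [Touches] at this
    rcases hx with rfl | rfl <;> tauto
  calc 2 * #S + 2 * k = #((S.biUnion fun j => {(g j).1, (g j).2}) ∪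
        univ.biUnion fun i => {(f i).1, (f i).2}) := by
        rw [card_union_of_disjoint hdisj, hg.card_biUnion_endpoints, hf.card_biUnion_endpoints,
          card_univ, Fintype.card_fin]
    _ ≤ Fintype.card V := card_le_univ _

theorem IsGreedySeq.mWeight_le_mul (hf : IsGreedySeq w f) (hg : IsMatching g)
    (hnonneg : ∀ x y, 0 ≤ w x y)
    (hmetric : ∀ x y z, x ≠ y → y ≠ z → x ≠ z → w x y ≤ w x z + w z y) (hk : 0 < k) {t : ℝ}
    (ht : 2 ≤ t) (hcard : m + #{j | firstTouch f (g j) = none} ≤ t * k) :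
    mWeight w g ≤ t * mWeight w f := by
  have hne : (univ : Finset (Fin k)).Nonempty := univ_nonempty_iff.2 ⟨⟨0, hk⟩⟩
  set b : Fin k → ℝ := fun i => w (f i).1 (f i).2
  -- a free edge of `g` is charged to the lightest greedy edge
  refine sum_le_mul_sum_of_charge _ b (fun j => firstTouch f (g j)) (μ := univ.inf' hne b)
    (le_inf' hne _ fun i _ => hnonneg _ _) (fun i => inf'_le _ (mem_univ i)) (fun j hj => ?_)
    (fun j i hj => hf.le_of_firstTouch_eq_some (hg.1 j) hj)
    (fun i => (card_le_card fun j hj => ?_).trans (hg.card_touches_le_two (f i))) ht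
    (by simpa using hcard)
  · obtain ⟨i, -, hi⟩ := exists_mem_eq_inf' hne b
    rw [hi]
    exact hf.le_two_mul_of_firstTouch_eq_none hmetric (hg.1 j) hj i
  · simp only [mem_filter, mem_univ, true_and] at hj ⊢
    exact (firstTouch_eq_some hj).1

end Matching

theorem stmt_1_general (N : ℕ) (w : Fin N → Fin N → ℝ)
    (hnonneg : ∀ x y, 0 ≤ w x y)
    (hmetric : ∀ x y z : Fin N, x ≠ y → y ≠ z → x ≠ z → w x y ≤ w x z + w z y)
    (k kstar : ℕ) (hk : 1 ≤ k)
    (f : Fin k → Fin N × Fin N) (hf : IsGreedySeq w f)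
    (g : Fin kstar → Fin N × Fin N) (hg : IsMatching g) :
    (2 * (k : ℝ) / N + 2 * (kstar : ℝ) / N < 1 →
      mWeight w g ≤
        max 2 (2 * (2 * (kstar : ℝ) / N) / (2 * (k : ℝ) / N)) * mWeight w f) ∧
    (1 ≤ 2 * (k : ℝ) / N + 2 * (kstar : ℝ) / N →
      mWeight w g ≤
        max 2 ((2 * (kstar : ℝ) / N + 1) / (2 * (k : ℝ) / N) - 1) * mWeight w f) := by
  have hN : (N : ℝ) ≠ 0 := Nat.cast_ne_zero.2 (f ⟨0, hk⟩).1.pos.ne'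
  have hk' : (k : ℝ) ≠ 0 := by positivity
  set F := #{j | firstTouch f (g j) = none}
  have hcount : 2 * (F : ℝ) + 2 * k ≤ N := by
    exact_mod_cast (hf.1.two_mul_card_untouched_add_two_mul_le hg).trans_eq (Fintype.card_fin N)
  have hF : (F : ℝ) ≤ kstar := by exact_mod_cast card_le_univ _ |>.trans_eq (Fintype.card_fin _)
  have hbound (t : ℝ) (ht : 2 ≤ t) (hcard : kstar + F ≤ t * k) : mWeight w g ≤ t * mWeight w f :=
    hf.mWeight_le_mul hg hnonneg hmetric hk ht hcard
  refine ⟨fun _ => hbound _ (le_max_left _ _) ?_, fun _ => hbound _ (le_max_left _ _) ?_⟩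
  · calc (kstar + F : ℝ) ≤ 2 * (2 * kstar / N) / (2 * k / N) * k := by field_simp; linarith
      _ ≤ _ := by gcongr; exact le_max_right _ _
  · calc (kstar + F : ℝ) ≤ ((2 * kstar / N + 1) / (2 * k / N) - 1) * k := by field_simp; linarith
      _ ≤ _ := by gcongr; exact le_max_right _ _

/-- performance of the greedy `k`-matching against an optimal `k*`-matching,
with `α = 2k/N` and `α* = 2k*/N`:
if `α + α* < 1` then `w(M*) ≤ max 2 (2α*/α) · w(M)`, and
if `α + α* ≥ 1` then `w(M*) ≤ max 2 ((α*+1)/α − 1) · w(M)`. -/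
theorem stmt_1 (N : ℕ) (w : Fin N → Fin N → ℝ)
    (hnonneg : ∀ x y, 0 ≤ w x y)
    (hsymm : ∀ x y, w x y = w y x)
    (hmetric : ∀ x y z : Fin N, x ≠ y → y ≠ z → x ≠ z → w x y ≤ w x z + w z y)
    (k kstar : ℕ) (hk : 1 ≤ k)
    (f : Fin k → Fin N × Fin N) (hf : IsGreedySeq w f)
    (g : Fin kstar → Fin N × Fin N) (hg : IsMatching g) :
    (2 * (k : ℝ) / N + 2 * (kstar : ℝ) / N < 1 →
      mWeight w g ≤
        max 2 (2 * (2 * (kstar : ℝ) / N) / (2 * (k : ℝ) / N)) * mWeight w f) ∧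
    (1 ≤ 2 * (k : ℝ) / N + 2 * (kstar : ℝ) / N →
      mWeight w g ≤
        max 2 ((2 * (kstar : ℝ) / N + 1) / (2 * (k : ℝ) / N) - 1) * mWeight w f) :=
  stmt_1_general N w hnonneg hmetric k kstar hk f hf g hg
end

section
/- Let w be metric weights on a finite set 𝒩 of N points, let e_1,…,e_k be a greedy sequence of k edges on 𝒩 (with 2k ≤ N), and let M denote the matching {e_1,…,e_k}. Then for every matching M* on 𝒩 with at most k edges, w(M*) ≤ 2·w(M). In other words, the greedy algorithm is a 2-approximation for the Maximum Weight k-Matching problem for every k, and hence for the Maximum Weight (perfect) Matching problem. -/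
lemma greedy_aux (N kstar : ℕ) (w : Fin N → Fin N → ℝ)
    (hnonneg : ∀ x y, 0 ≤ w x y)
    (hmetric : ∀ x y z : Fin N, x ≠ y → y ≠ z → x ≠ z → w x y ≤ w x z + w z y)
    (g : Fin kstar → Fin N × Fin N) (hgm : IsMatching g) :
    ∀ (k : ℕ) (S : Set (Fin N)) (f : Fin k → Fin N × Fin N),
    (∀ i, (f i).1 ∈ S ∧ (f i).2 ∈ S) →
    (∀ i, (f i).1 ≠ (f i).2) →
    (∀ i j : Fin k, i ≠ j →
      (f i).1 ≠ (f j).1 ∧ (f i).1 ≠ (f j).2 ∧ (f i).2 ≠ (f j).1 ∧ (f i).2 ≠ (f j).2) →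
    (∀ i : Fin k, ∀ x y, x ∈ S → y ∈ S → x ≠ y →
      (∀ j, j < i → x ≠ (f j).1 ∧ x ≠ (f j).2) →
      (∀ j, j < i → y ≠ (f j).1 ∧ y ≠ (f j).2) →
      (x = (f i).1 ∨ x = (f i).2 ∨ y = (f i).1 ∨ y = (f i).2) →
      w x y ≤ w (f i).1 (f i).2) →
    ∀ I : Finset (Fin kstar), I.card ≤ k →
    (∀ i ∈ I, (g i).1 ∈ S ∧ (g i).2 ∈ S) →
    ∑ i ∈ I, w (g i).1 (g i).2 ≤ 2 * mWeight w f := by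
  intro k
  induction k with
  | zero =>
    intro S f _ _ _ _ I hIcard _
    have : I = ∅ := Finset.card_eq_zero.mp (Nat.le_zero.mp hIcard)
    simp [this, mWeight]
  | succ m ih =>
    intro S f hfS hfne hfdisj hgreedy I hIcard hgS
    set a := (f 0).1 with ha
    set b := (f 0).2 with hb
    have hW0 : 0 ≤ w a b := hnonneg a b
    have F1 : ∀ x y, x ∈ S → y ∈ S → x ≠ y → (x = a ∨ x = b ∨ y = a ∨ y = b) →
        w x y ≤ w a b := by
      intro x y hx hy hxy hadj
      exact hgreedy 0 x y hx hy hxy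
        (fun j hj => absurd hj (Fin.not_lt_zero j))
        (fun j hj => absurd hj (Fin.not_lt_zero j)) hadj
    have F2 : ∀ x y, x ∈ S → y ∈ S → x ≠ y → w x y ≤ 2 * w a b := by
      intro x y hx hy hxy
      by_cases hcase : x = a ∨ x = b ∨ y = a ∨ y = b
      · linarith [F1 x y hx hy hxy hcase]
      · push_neg at hcase
        obtain ⟨h1, h2, h3, h4⟩ := hcase
        have hxa : w x a ≤ w a b := F1 x a hx (hfS 0).1 h1 (Or.inr (Or.inr (Or.inl rfl)))
        have hay : w a y ≤ w a b := F1 a y (hfS 0).1 hy (fun h => h3 h.symm) (Or.inl rfl)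
        have := hmetric x y a hxy h3 h1
        linarith
    -- tail
    have hsum_f : mWeight w f = w a b + mWeight w (fun i : Fin m => f i.succ) := by
      simp [mWeight, Fin.sum_univ_succ, ha, hb]
    have hfS' : ∀ i : Fin m, ((fun i : Fin m => f i.succ) i).1 ∈ S \ {a, b} ∧
        ((fun i : Fin m => f i.succ) i).2 ∈ S \ {a, b} := by
      intro i
      have hd := hfdisj i.succ 0 (Fin.succ_ne_zero i)
      refine ⟨⟨(hfS i.succ).1, ?_⟩, ⟨(hfS i.succ).2, ?_⟩⟩ <;>
        simp only [Set.mem_insert_iff, Set.mem_singleton_iff, not_or]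
      · exact ⟨hd.1, hd.2.1⟩
      · exact ⟨hd.2.2.1, hd.2.2.2⟩
    have hfdisj' : ∀ i j : Fin m, i ≠ j →
        (f i.succ).1 ≠ (f j.succ).1 ∧ (f i.succ).1 ≠ (f j.succ).2 ∧
        (f i.succ).2 ≠ (f j.succ).1 ∧ (f i.succ).2 ≠ (f j.succ).2 := by
      intro i j hij
      exact hfdisj i.succ j.succ (fun h => hij (Fin.succ_injective _ h))
    have hgreedy' : ∀ i : Fin m, ∀ x y, x ∈ S \ {a, b} → y ∈ S \ {a, b} → x ≠ y →
        (∀ j, j < i → x ≠ (f j.succ).1 ∧ x ≠ (f j.succ).2) →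
        (∀ j, j < i → y ≠ (f j.succ).1 ∧ y ≠ (f j.succ).2) →
        (x = (f i.succ).1 ∨ x = (f i.succ).2 ∨ y = (f i.succ).1 ∨ y = (f i.succ).2) →
        w x y ≤ w (f i.succ).1 (f i.succ).2 := by
      intro i x y hx hy hxy hxj hyj hadj
      have hxab : x ≠ a ∧ x ≠ b := by
        have := hx.2; simp only [Set.mem_insert_iff, Set.mem_singleton_iff, not_or] at this
        exact this
      have hyab : y ≠ a ∧ y ≠ b := by
        have := hy.2; simp only [Set.mem_insert_iff, Set.mem_singleton_iff, not_or] at this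
        exact this
      refine hgreedy i.succ x y hx.1 hy.1 hxy ?_ ?_ hadj
      · intro j hj
        induction j using Fin.cases with
        | zero => exact ⟨hxab.1, hxab.2⟩
        | succ j' => exact hxj j' (by simpa using hj)
      · intro j hj
        induction j using Fin.cases with
        | zero => exact ⟨hyab.1, hyab.2⟩
        | succ j' => exact hyj j' (by simpa using hj)
    have IH := ih (S \ {a, b}) (fun i : Fin m => f i.succ) hfS'
      (fun i => hfne i.succ) hfdisj' hgreedy'
    -- the set of matching edges touching {a, b}
    set T : Finset (Fin kstar) :=
      I.filter (fun i => (g i).1 = a ∨ (g i).1 = b ∨ (g i).2 = a ∨ (g i).2 = b) with hT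
    have hTsub : T ⊆ I := Finset.filter_subset _ _
    have hnotouch : ∀ i ∈ I \ T, (g i).1 ≠ a ∧ (g i).1 ≠ b ∧ (g i).2 ≠ a ∧ (g i).2 ≠ b := by
      intro i hi
      rw [Finset.mem_sdiff] at hi
      have := hi.2
      rw [hT, Finset.mem_filter] at this
      push_neg at this
      exact this hi.1
    have hgS' : ∀ i ∈ I \ T, (g i).1 ∈ S \ {a, b} ∧ (g i).2 ∈ S \ {a, b} := by
      intro i hi
      have hm := hgS i (Finset.mem_sdiff.mp hi).1
      have hn := hnotouch i hi
      refine ⟨⟨hm.1, ?_⟩, ⟨hm.2, ?_⟩⟩ <;>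
        simp only [Set.mem_insert_iff, Set.mem_singleton_iff, not_or]
      · exact ⟨hn.1, hn.2.1⟩
      · exact ⟨hn.2.2.1, hn.2.2.2⟩
    have hTcard : T.card ≤ 2 := by
      have hsub : T ⊆ (I.filter fun i => (g i).1 = a ∨ (g i).2 = a) ∪
          (I.filter fun i => (g i).1 = b ∨ (g i).2 = b) := by
        intro i hi
        rw [hT, Finset.mem_filter] at hi
        rw [Finset.mem_union, Finset.mem_filter, Finset.mem_filter]
        tauto
      have hca : (I.filter fun i => (g i).1 = a ∨ (g i).2 = a).card ≤ 1 := by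
        rw [Finset.card_le_one]
        intro i hi j hj
        rw [Finset.mem_filter] at hi hj
        by_contra hij
        obtain ⟨h1, h2, h3, h4⟩ := hgm.2 i j hij
        rcases hi.2 with h | h <;> rcases hj.2 with h' | h'
        · exact h1 (h.trans h'.symm)
        · exact h2 (h.trans h'.symm)
        · exact h3 (h.trans h'.symm)
        · exact h4 (h.trans h'.symm)
      have hcb : (I.filter fun i => (g i).1 = b ∨ (g i).2 = b).card ≤ 1 := by
        rw [Finset.card_le_one]
        intro i hi j hj
        rw [Finset.mem_filter] at hi hj
        by_contra hij
        obtain ⟨h1, h2, h3, h4⟩ := hgm.2 i j hij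
        rcases hi.2 with h | h <;> rcases hj.2 with h' | h'
        · exact h1 (h.trans h'.symm)
        · exact h2 (h.trans h'.symm)
        · exact h3 (h.trans h'.symm)
        · exact h4 (h.trans h'.symm)
      calc T.card ≤ _ := Finset.card_le_card hsub
        _ ≤ _ := Finset.card_union_le _ _
        _ ≤ 2 := by omega
    have hTbound : ∑ i ∈ T, w (g i).1 (g i).2 ≤ 2 * w a b := by
      have h1 : ∑ i ∈ T, w (g i).1 (g i).2 ≤ ∑ _i ∈ T, w a b := by
        refine Finset.sum_le_sum ?_
        intro i hi
        have hiI := hTsub hi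
        rw [hT, Finset.mem_filter] at hi
        exact F1 _ _ (hgS i hiI).1 (hgS i hiI).2 (hgm.1 i) hi.2
      have h2 : ∑ _i ∈ T, w a b = (T.card : ℝ) * w a b := by
        rw [Finset.sum_const, nsmul_eq_mul]
      have h3 : (T.card : ℝ) * w a b ≤ 2 * w a b := by
        apply mul_le_mul_of_nonneg_right _ hW0
        exact_mod_cast hTcard
      linarith
    by_cases hTe : T = ∅
    · rcases Finset.eq_empty_or_nonempty I with hIe | ⟨i0, hi0⟩
      · have : (0:ℝ) ≤ 2 * mWeight w f := by
          apply mul_nonneg (by norm_num)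
          exact Finset.sum_nonneg fun i _ => hnonneg _ _
        simpa [hIe] using this
      · have hnt : ∀ i ∈ I, (g i).1 ≠ a ∧ (g i).1 ≠ b ∧ (g i).2 ≠ a ∧ (g i).2 ≠ b := by
          intro i hi
          apply hnotouch
          rw [Finset.mem_sdiff, hTe]
          exact ⟨hi, Finset.notMem_empty i⟩
        have hsplit : w (g i0).1 (g i0).2 + ∑ i ∈ I.erase i0, w (g i).1 (g i).2
            = ∑ i ∈ I, w (g i).1 (g i).2 := Finset.add_sum_erase I (fun i => w (g i).1 (g i).2) hi0
        have hcard' : (I.erase i0).card ≤ m := by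
          rw [Finset.card_erase_of_mem hi0]; omega
        have hmem' : ∀ i ∈ I.erase i0, (g i).1 ∈ S \ {a, b} ∧ (g i).2 ∈ S \ {a, b} := by
          intro i hi
          have hiI := Finset.mem_of_mem_erase hi
          have hm := hgS i hiI
          have hn := hnt i hiI
          refine ⟨⟨hm.1, ?_⟩, ⟨hm.2, ?_⟩⟩ <;>
            simp only [Set.mem_insert_iff, Set.mem_singleton_iff, not_or]
          · exact ⟨hn.1, hn.2.1⟩
          · exact ⟨hn.2.2.1, hn.2.2.2⟩
        have h0 : w (g i0).1 (g i0).2 ≤ 2 * w a b :=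
          F2 _ _ (hgS i0 hi0).1 (hgS i0 hi0).2 (hgm.1 i0)
        have := IH (I.erase i0) hcard' hmem'
        rw [hsum_f]
        linarith
    · have hTne : 1 ≤ T.card := Finset.card_pos.mpr (Finset.nonempty_iff_ne_empty.mpr hTe)
      have hsplit : ∑ i ∈ I \ T, w (g i).1 (g i).2 + ∑ i ∈ T, w (g i).1 (g i).2
          = ∑ i ∈ I, w (g i).1 (g i).2 := Finset.sum_sdiff hTsub
      have hcard' : (I \ T).card ≤ m := by
        rw [Finset.card_sdiff_of_subset hTsub]; omega
      have := IH (I \ T) hcard' hgS'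
      rw [hsum_f]
      linarith

/-- the greedy sequence of `k` edges is a `2`-approximation for the
Maximum Weight `k`-Matching problem: any matching with at most `k` edges has weight
at most `2 · w(M)` where `M` is the greedy matching. -/
theorem stmt_2 (N : ℕ) (w : Fin N → Fin N → ℝ)
    (hnonneg : ∀ x y, 0 ≤ w x y)
    (hsymm : ∀ x y, w x y = w y x)
    (hmetric : ∀ x y z : Fin N, x ≠ y → y ≠ z → x ≠ z → w x y ≤ w x z + w z y)
    (k : ℕ) (h2k : 2 * k ≤ N)
    (f : Fin k → Fin N × Fin N) (hf : IsGreedySeq w f)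
    (kstar : ℕ) (hkstar : kstar ≤ k)
    (g : Fin kstar → Fin N × Fin N) (hg : IsMatching g) :
    mWeight w g ≤ 2 * mWeight w f := by
  obtain ⟨hfm, hgreedy⟩ := hf
  have := greedy_aux N kstar w hnonneg hmetric g hg k Set.univ f
    (fun i => ⟨trivial, trivial⟩) hfm.1 hfm.2
    (fun i x y _ _ => hgreedy i x y)
    Finset.univ (by simpa using hkstar) (fun i _ => ⟨trivial, trivial⟩)
  simpa [mWeight] using this
end

section
/- Let N be divisible by 6, let w be metric weights on a finite set 𝒩 of N points, and let e_1,…,e_{N/3} be a greedy sequence of N/3 edges on 𝒩 with M = {e_1,…,e_{N/3}}. Then for every perfect matching M* of 𝒩 (i.e., a matching with N/2 edges covering all of 𝒩), one has w(M*) ≤ 2·w(M). That is, greedily choosing only two-thirds as many edges as a perfect matching already guarantees half the weight of the optimal perfect matching. -/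
/-- if `N = 6m` and `f` is a greedy sequence of `N/3 = 2m` edges, then any
perfect matching `g` (with `N/2 = 3m` edges, covering all points) satisfies
`w(M*) ≤ 2 · w(M)`. -/
theorem stmt_3 (m N : ℕ) (hN : N = 6 * m) (w : Fin N → Fin N → ℝ)
    (hnonneg : ∀ x y, 0 ≤ w x y)
    (hsymm : ∀ x y, w x y = w y x)
    (hmetric : ∀ x y z : Fin N, x ≠ y → y ≠ z → x ≠ z → w x y ≤ w x z + w z y)
    (f : Fin (2 * m) → Fin N × Fin N) (hf : IsGreedySeq w f)
    (g : Fin (3 * m) → Fin N × Fin N) (hg : IsMatching g)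
    (hcover : ∀ v : Fin N, ∃ i, v = (g i).1 ∨ v = (g i).2) :
    mWeight w g ≤ 2 * mWeight w f := by
  classical
  obtain ⟨hfM, hgreedy⟩ := hf
  rcases Nat.eq_zero_or_pos m with hm0 | hm
  · subst hm0
    simp [mWeight]
  have h2m : 0 < 2 * m := by omega
  -- uniqueness of covering index
  have huniq : ∀ (v : Fin N) (i i' : Fin (2*m)),
      (v = (f i).1 ∨ v = (f i).2) → (v = (f i').1 ∨ v = (f i').2) → i = i' := by
    intro v i i' h h'
    by_contra hne
    obtain ⟨h11, h12, h21, h22⟩ := hfM.2 i i' hne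
    rcases h with h | h <;> rcases h' with h' | h'
    · exact h11 (h.symm.trans h')
    · exact h12 (h.symm.trans h')
    · exact h21 (h.symm.trans h')
    · exact h22 (h.symm.trans h')
  -- the weight of the f-edge covering v (junk value if v uncovered)
  obtain ⟨wf, hwfeq, hwfge⟩ :
      ∃ wf : Fin N → ℝ,
        (∀ (v : Fin N) (i : Fin (2*m)), (v = (f i).1 ∨ v = (f i).2) →
          wf v = w (f i).1 (f i).2) ∧
        (∀ v : Fin N, ∃ i : Fin (2*m), wf v = w (f i).1 (f i).2) := by
    refine ⟨fun v => if h : ∃ i : Fin (2*m), v = (f i).1 ∨ v = (f i).2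
        then w (f h.choose).1 (f h.choose).2 else w (f ⟨0, h2m⟩).1 (f ⟨0, h2m⟩).2, ?_, ?_⟩
    · intro v i h
      have hex : ∃ i : Fin (2*m), v = (f i).1 ∨ v = (f i).2 := ⟨i, h⟩
      simp only [dif_pos hex]
      rw [huniq v hex.choose i hex.choose_spec h]
    · intro v
      by_cases hex : ∃ i : Fin (2*m), v = (f i).1 ∨ v = (f i).2
      · exact ⟨hex.choose, by simp only [dif_pos hex]⟩
      · exact ⟨⟨0, h2m⟩, by simp only [dif_neg hex]⟩
  -- the minimum-weight greedy edge
  obtain ⟨i₀, -, hi₀⟩ := Finset.exists_min_image (Finset.univ : Finset (Fin (2*m)))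
      (fun i => w (f i).1 (f i).2) ⟨⟨0, h2m⟩, Finset.mem_univ _⟩
  set μ := w (f i₀).1 (f i₀).2 with hμ
  have hμ0 : 0 ≤ μ := hnonneg _ _
  have hμle : ∀ i : Fin (2*m), μ ≤ w (f i).1 (f i).2 := fun i => hi₀ i (Finset.mem_univ _)
  have hwfμ : ∀ v, μ ≤ wf v := by
    intro v
    obtain ⟨i, hi⟩ := hwfge v
    rw [hi]; exact hμle i
  -- a point that is an endpoint of f i is not an endpoint of any earlier f j
  have hnb : ∀ (v : Fin N) (i : Fin (2*m)), (v = (f i).1 ∨ v = (f i).2) →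
      ∀ j, j < i → v ≠ (f j).1 ∧ v ≠ (f j).2 := by
    intro v i hv j hj
    obtain ⟨h11, h12, h21, h22⟩ := hfM.2 i j (Ne.symm (ne_of_lt hj))
    rcases hv with hv | hv
    · exact ⟨by rw [hv]; exact h11, by rw [hv]; exact h12⟩
    · exact ⟨by rw [hv]; exact h21, by rw [hv]; exact h22⟩
  -- the covered-charge predicate
  set P : Fin (3*m) → Prop := fun j =>
    (∃ i, (g j).1 = (f i).1 ∨ (g j).1 = (f i).2) ∨
    (∃ i, (g j).2 = (f i).1 ∨ (g j).2 = (f i).2) with hP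
  -- the charging map
  have hcharge : ∀ j : Fin (3*m), P j →
      ∃ v, (v = (g j).1 ∨ v = (g j).2) ∧ (∃ i, v = (f i).1 ∨ v = (f i).2) ∧
        w (g j).1 (g j).2 ≤ wf v := by
    intro j hj
    have hxy : (g j).1 ≠ (g j).2 := hg.1 j
    by_cases hx : ∃ i, (g j).1 = (f i).1 ∨ (g j).1 = (f i).2
    · obtain ⟨i, hi⟩ := hx
      by_cases hy : ∃ i', (g j).2 = (f i').1 ∨ (g j).2 = (f i').2
      · obtain ⟨i', hi'⟩ := hy
        rcases le_total i i' with hle | hle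
        · refine ⟨(g j).1, Or.inl rfl, ⟨i, hi⟩, ?_⟩
          rw [hwfeq _ i hi]
          exact hgreedy i _ _ hxy (fun k hk => hnb _ i hi k hk)
            (fun k hk => hnb _ i' hi' k (lt_of_lt_of_le hk hle))
            (by rcases hi with h | h
                · exact Or.inl h
                · exact Or.inr (Or.inl h))
        · refine ⟨(g j).2, Or.inr rfl, ⟨i', hi'⟩, ?_⟩
          rw [hwfeq _ i' hi']
          exact hgreedy i' _ _ hxy (fun k hk => hnb _ i hi k (lt_of_lt_of_le hk hle))
            (fun k hk => hnb _ i' hi' k hk)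
            (by rcases hi' with h | h
                · exact Or.inr (Or.inr (Or.inl h))
                · exact Or.inr (Or.inr (Or.inr h)))
      · push_neg at hy
        refine ⟨(g j).1, Or.inl rfl, ⟨i, hi⟩, ?_⟩
        rw [hwfeq _ i hi]
        exact hgreedy i _ _ hxy (fun k hk => hnb _ i hi k hk)
          (fun k _ => hy k)
          (by rcases hi with h | h
              · exact Or.inl h
              · exact Or.inr (Or.inl h))
    · push_neg at hx
      rcases hj with hj' | hy
      · exact absurd hj' (by push_neg; exact hx)
      · obtain ⟨i', hi'⟩ := hy
        refine ⟨(g j).2, Or.inr rfl, ⟨i', hi'⟩, ?_⟩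
        rw [hwfeq _ i' hi']
        exact hgreedy i' _ _ hxy (fun k _ => hx k)
          (fun k hk => hnb _ i' hi' k hk)
          (by rcases hi' with h | h
              · exact Or.inr (Or.inr (Or.inl h))
              · exact Or.inr (Or.inr (Or.inr h)))
  obtain ⟨ι, hιspec⟩ :
      ∃ ι : Fin (3*m) → Fin N, ∀ j, P j →
        (ι j = (g j).1 ∨ ι j = (g j).2) ∧ (∃ i, ι j = (f i).1 ∨ ι j = (f i).2) ∧
          w (g j).1 (g j).2 ≤ wf (ι j) := by
    refine ⟨fun j => if h : P j then (hcharge j h).choose else (g j).1, fun j h => ?_⟩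
    simp only [dif_pos h]
    exact (hcharge j h).choose_spec
  set S : Finset (Fin (3*m)) := Finset.univ.filter P with hS
  set T : Finset (Fin (3*m)) := Finset.univ.filter (fun j => ¬ P j) with hT
  have hmemS : ∀ j ∈ S, P j := fun j hj => (Finset.mem_filter.mp hj).2
  have hmemT : ∀ j ∈ T, ¬ P j := fun j hj => (Finset.mem_filter.mp hj).2
  -- injectivity of ι on S
  have hinj : Set.InjOn ι ↑S := by
    intro a ha b hb hab
    by_contra hne
    obtain ⟨h11, h12, h21, h22⟩ := hg.2 a b hne
    have ha' := (hιspec a (hmemS a ha)).1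
    have hb' := (hιspec b (hmemS b hb)).1
    rcases ha' with h | h <;> rcases hb' with h' | h' <;> rw [h, h'] at hab
    · exact h11 hab
    · exact h12 hab
    · exact h21 hab
    · exact h22 hab
  -- the covered set
  set C : Finset (Fin N) := Finset.univ.biUnion
      (fun i : Fin (2*m) => {(f i).1, (f i).2}) with hC
  have hCdisj : ∀ i ∈ (Finset.univ : Finset (Fin (2*m))), ∀ i' ∈ Finset.univ, i ≠ i' →
      Disjoint ({(f i).1, (f i).2} : Finset (Fin N)) {(f i').1, (f i').2} := by
    intro i _ i' _ hne
    obtain ⟨h11, h12, h21, h22⟩ := hfM.2 i i' hne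
    simp only [Finset.disjoint_left, Finset.mem_insert, Finset.mem_singleton]
    rintro a (rfl | rfl) h
    · rcases h with h | h
      · exact h11 h
      · exact h12 h
    · rcases h with h | h
      · exact h21 h
      · exact h22 h
  have hCdisj' : Set.PairwiseDisjoint (↑(Finset.univ : Finset (Fin (2*m))))
      (fun i : Fin (2*m) => ({(f i).1, (f i).2} : Finset (Fin N))) := by
    intro i hi i' hi' hne
    exact hCdisj i (Finset.mem_univ _) i' (Finset.mem_univ _) hne
  have hCsum : ∑ v ∈ C, wf v = 2 * mWeight w f := by
    rw [hC, Finset.sum_biUnion hCdisj', mWeight, Finset.mul_sum]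
    refine Finset.sum_congr rfl fun i _ => ?_
    rw [Finset.sum_pair (hfM.1 i), hwfeq _ i (Or.inl rfl), hwfeq _ i (Or.inr rfl)]
    ring
  have hCcard : C.card = 4 * m := by
    rw [hC, Finset.card_biUnion hCdisj]
    rw [Finset.sum_congr rfl fun i _ => Finset.card_pair (hfM.1 i)]
    simp only [Finset.sum_const, Finset.card_univ, Fintype.card_fin, smul_eq_mul]
    omega
  have hmemC : ∀ v : Fin N, v ∈ C ↔ ∃ i, v = (f i).1 ∨ v = (f i).2 := by
    intro v
    simp only [hC, Finset.mem_biUnion, Finset.mem_univ, true_and,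
      Finset.mem_insert, Finset.mem_singleton]
  -- image of S under ι is inside C
  have hsub : S.image ι ⊆ C := by
    intro v hv
    obtain ⟨j, hj, rfl⟩ := Finset.mem_image.mp hv
    exact (hmemC _).mpr ((hιspec j (hmemS j hj)).2.1)
  have himgcard : (S.image ι).card = S.card := Finset.card_image_of_injOn hinj
  -- cardinalities
  have hST : S.card + T.card = 3 * m := by
    rw [hS, hT]
    rw [Finset.card_filter_add_card_filter_not]
    simp
  have hCfilter : C = Finset.univ.filter (fun v => ∃ i, v = (f i).1 ∨ v = (f i).2) := by
    ext v
    simp only [Finset.mem_filter, Finset.mem_univ, true_and]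
    exact hmemC v
  have hUcard : (Finset.univ.filter
      (fun v : Fin N => ¬ ∃ i, v = (f i).1 ∨ v = (f i).2)).card = 2 * m := by
    have h := Finset.card_filter_add_card_filter_not
      (s := (Finset.univ : Finset (Fin N)))
      (p := fun v : Fin N => ∃ i, v = (f i).1 ∨ v = (f i).2)
    rw [← hCfilter, hCcard, Finset.card_univ, Fintype.card_fin] at h
    omega
  -- T edges live in the uncovered set
  have hTcard : T.card ≤ m := by
    have hd : ∀ a ∈ T, ∀ b ∈ T, a ≠ b →
        Disjoint ({(g a).1, (g a).2} : Finset (Fin N)) {(g b).1, (g b).2} := by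
      intro a _ b _ hne
      obtain ⟨h11, h12, h21, h22⟩ := hg.2 a b hne
      simp only [Finset.disjoint_left, Finset.mem_insert, Finset.mem_singleton]
      rintro v (rfl | rfl) h
      · rcases h with h | h
        · exact h11 h
        · exact h12 h
      · rcases h with h | h
        · exact h21 h
        · exact h22 h
    have hsubU : T.biUnion (fun j => ({(g j).1, (g j).2} : Finset (Fin N))) ⊆
        Finset.univ.filter (fun v : Fin N => ¬ ∃ i, v = (f i).1 ∨ v = (f i).2) := by
      intro v hv
      obtain ⟨j, hj, hv⟩ := Finset.mem_biUnion.mp hv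
      have hPj : ¬ P j := hmemT j hj
      simp only [hP] at hPj
      push_neg at hPj
      simp only [Finset.mem_insert, Finset.mem_singleton] at hv
      refine Finset.mem_filter.mpr ⟨Finset.mem_univ _, ?_⟩
      rintro ⟨i, hi⟩
      rcases hv with rfl | rfl
      · rcases hi with h | h
        · exact (hPj.1 i).1 h
        · exact (hPj.1 i).2 h
      · rcases hi with h | h
        · exact (hPj.2 i).1 h
        · exact (hPj.2 i).2 h
    have hcard1 : (T.biUnion (fun j => ({(g j).1, (g j).2} : Finset (Fin N)))).card
        = 2 * T.card := by
      rw [Finset.card_biUnion hd]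
      rw [Finset.sum_congr rfl fun j _ => Finset.card_pair (hg.1 j)]
      simp [Finset.sum_const, mul_comm]
    have := Finset.card_le_card hsubU
    rw [hcard1, hUcard] at this
    omega
  -- bound on T edges
  have hTbound : ∀ j ∈ T, w (g j).1 (g j).2 ≤ μ + μ := by
    intro j hj
    have hPj : ¬ P j := hmemT j hj
    simp only [hP] at hPj
    push_neg at hPj
    obtain ⟨hx, hy⟩ := hPj
    have hxy : (g j).1 ≠ (g j).2 := hg.1 j
    have hxz : (g j).1 ≠ (f i₀).1 := (hx i₀).1
    have hyz : (g j).2 ≠ (f i₀).1 := (hy i₀).1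
    have h1 : w (g j).1 (f i₀).1 ≤ μ :=
      hgreedy i₀ _ _ hxz (fun k _ => hx k)
        (fun k hk => hnb _ i₀ (Or.inl rfl) k hk)
        (Or.inr (Or.inr (Or.inl rfl)))
    have h2 : w (f i₀).1 (g j).2 ≤ μ :=
      hgreedy i₀ _ _ (Ne.symm hyz) (fun k hk => hnb _ i₀ (Or.inl rfl) k hk)
        (fun k _ => hy k) (Or.inl rfl)
    have h3 : w (g j).1 (g j).2 ≤ w (g j).1 (f i₀).1 + w (f i₀).1 (g j).2 :=
      hmetric _ _ _ hxy hyz hxz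
    linarith
  -- assemble the sums
  have hsplit : ∑ j ∈ S, w (g j).1 (g j).2 + ∑ j ∈ T, w (g j).1 (g j).2 = mWeight w g := by
    rw [hS, hT, mWeight]
    exact Finset.sum_filter_add_sum_filter_not _ _ _
  have hSsum : ∑ j ∈ S, w (g j).1 (g j).2 ≤ ∑ v ∈ S.image ι, wf v := by
    rw [Finset.sum_image (fun a ha b hb => hinj ha hb)]
    exact Finset.sum_le_sum fun j hj => (hιspec j (hmemS j hj)).2.2
  have hTsum : ∑ j ∈ T, w (g j).1 (g j).2 ≤ (T.card : ℝ) * (μ + μ) := by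
    calc ∑ j ∈ T, w (g j).1 (g j).2 ≤ ∑ _j ∈ T, (μ + μ) :=
          Finset.sum_le_sum hTbound
      _ = (T.card : ℝ) * (μ + μ) := by rw [Finset.sum_const, nsmul_eq_mul]
  have hsdiff : ∑ v ∈ C \ S.image ι, wf v + ∑ v ∈ S.image ι, wf v = ∑ v ∈ C, wf v :=
    Finset.sum_sdiff hsub
  have hsdcard : (C \ S.image ι).card = m + T.card := by
    rw [Finset.card_sdiff_of_subset hsub, himgcard, hCcard]
    omega
  have hlower : ((m : ℝ) + T.card) * μ ≤ ∑ v ∈ C \ S.image ι, wf v := by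
    have := Finset.card_nsmul_le_sum (C \ S.image ι) wf μ (fun v _ => hwfμ v)
    rw [hsdcard, nsmul_eq_mul] at this
    push_cast at this
    linarith
  have hTm : (T.card : ℝ) ≤ (m : ℝ) := by exact_mod_cast hTcard
  have : (T.card : ℝ) * (μ + μ) ≤ ((m : ℝ) + T.card) * μ := by nlinarith
  linarith [hCsum ▸ hsdiff]
end

section
/- Let w be metric weights on a finite set 𝒮, let T ⊆ 𝒮 with |T| = n ≥ 1, and let M be any perfect matching of 𝒮. Then w(M) ≤ (2/n)·Σ_{ {x,y} ⊆ T } w(x,y) + (1/n)·Σ_{ x ∈ T, y ∈ 𝒮∖T } w(x,y). -/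
/-!
Fix a point `t ∈ T`. For every matched pair `{x, σ x}` the triangle inequality through `t` gives
`w(x, σ x) ≤ w(x, t) + w(t, σ x)`, where a term vanishes when `t` is one of the endpoints.
Summing over `t ∈ T` and over all `x` counts every pair `(t, y)` with `t ∈ T`, `y ≠ t` exactly
twice, once through `x = y` and once through `σ x = y`. Hence
`n · 2 w(M) ≤ 2 (Σ_{t ≠ t' ∈ T} w(t, t') + Σ_{t ∈ T, y ∉ T} w(t, y))`.
-/

open Finset

section ZeroDiag

variable {S R : Type*} [DecidableEq S]

def zeroDiag [Zero R] (w : S → S → R) (x y : S) : R := if x = y then 0 else w x y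

variable [AddCommMonoid R] (w : S → S → R)

lemma zeroDiag_comm (hsymm : ∀ x y, w x y = w y x) (x y : S) :
    zeroDiag w x y = zeroDiag w y x := by
  simp only [zeroDiag, eq_comm (a := x), hsymm x y]

lemma sum_zeroDiag_add_zeroDiag_perm [Fintype S] (hsymm : ∀ x y, w x y = w y x)
    (σ : Equiv.Perm S) (t : S) :
    ∑ x, (zeroDiag w x t + zeroDiag w t (σ x)) = 2 • ∑ x, zeroDiag w t x := by
  rw [sum_add_distrib, Equiv.sum_comp σ (zeroDiag w t), two_nsmul]
  simp only [zeroDiag_comm w hsymm _ t]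

lemma sum_sum_zeroDiag [Fintype S] (T : Finset S) :
    ∑ t ∈ T, ∑ x, zeroDiag w t x
      = ∑ p ∈ T.offDiag, w p.1 p.2 + ∑ t ∈ T, ∑ y ∈ Tᶜ, w t y := by
  have hsplit : ∀ t ∈ T, ∑ x, zeroDiag w t x
      = ∑ x ∈ T, zeroDiag w t x + ∑ y ∈ Tᶜ, w t y := fun t ht => by
    rw [← sum_add_sum_compl T]
    refine congrArg _ (sum_congr rfl fun y hy => if_neg ?_)
    rintro rfl
    exact mem_compl.mp hy ht
  have hoffDiag : T.offDiag = (T ×ˢ T).filter fun p => p.1 ≠ p.2 := by ext; simp [and_assoc]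
  rw [sum_congr rfl hsplit, sum_add_distrib, hoffDiag, sum_filter, sum_product]
  simp only [zeroDiag, ite_not]

variable [PartialOrder R]

lemma le_zeroDiag_add_zeroDiag
    (hmetric : ∀ x y z : S, x ≠ y → y ≠ z → x ≠ z → w x y ≤ w x z + w z y)
    {x y : S} (hxy : x ≠ y) (z : S) : w x y ≤ zeroDiag w x z + zeroDiag w z y := by
  unfold zeroDiag
  by_cases hxz : x = z
  · subst hxz; simp [hxy]
  by_cases hzy : z = y
  · subst hzy; simp [hxz]
  simpa [hxz, hzy] using hmetric x y z hxy (Ne.symm hzy) hxz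

variable [IsOrderedAddMonoid R]

theorem card_nsmul_sum_perm_le [Fintype S] (hsymm : ∀ x y, w x y = w y x)
    (hmetric : ∀ x y z : S, x ≠ y → y ≠ z → x ≠ z → w x y ≤ w x z + w z y)
    (T : Finset S) (σ : Equiv.Perm S) (hfix : ∀ x, σ x ≠ x) :
    T.card • ∑ x, w x (σ x)
      ≤ 2 • (∑ p ∈ T.offDiag, w p.1 p.2 + ∑ t ∈ T, ∑ y ∈ Tᶜ, w t y) :=
  calc T.card • ∑ x, w x (σ x)
      = ∑ x, ∑ _t ∈ T, w x (σ x) := by rw [smul_sum]; simp only [sum_const]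
    _ ≤ ∑ x, ∑ t ∈ T, (zeroDiag w x t + zeroDiag w t (σ x)) :=
      sum_le_sum fun x _ => sum_le_sum fun t _ =>
        le_zeroDiag_add_zeroDiag w hmetric (hfix x).symm t
    _ = ∑ t ∈ T, 2 • ∑ x, zeroDiag w t x := by
      rw [sum_comm]
      exact sum_congr rfl fun t _ => sum_zeroDiag_add_zeroDiag_perm w hsymm σ t
    _ = 2 • (∑ p ∈ T.offDiag, w p.1 p.2 + ∑ t ∈ T, ∑ y ∈ Tᶜ, w t y) := by
      rw [← smul_sum, sum_sum_zeroDiag]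

end ZeroDiag

theorem stmt_6_general {S : Type*} [Fintype S] [DecidableEq S]
    (w : S → S → ℝ)
    (hsymm : ∀ x y, w x y = w y x)
    (hmetric : ∀ x y z : S, x ≠ y → y ≠ z → x ≠ z → w x y ≤ w x z + w z y)
    (T : Finset S) (n : ℕ) (hT : T.card = n) (hn : 1 ≤ n)
    (σ : Equiv.Perm S) (hfix : ∀ x, σ x ≠ x) :
    (∑ x, w x (σ x)) / 2
      ≤ (2 / (n : ℝ)) * ((∑ p ∈ T.offDiag, w p.1 p.2) / 2)
        + (1 / (n : ℝ)) * (∑ x ∈ T, ∑ y ∈ Tᶜ, w x y) := by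
  have hpos : (0 : ℝ) < n := by exact_mod_cast hn
  have key := card_nsmul_sum_perm_le w hsymm hmetric T σ hfix
  rw [hT, nsmul_eq_mul, nsmul_eq_mul] at key
  rw [div_le_iff₀ two_pos]
  field_simp
  push_cast at key
  linarith

/-- for metric weights `w` on a finite set `𝒮`, a subset `T` of size `n ≥ 1`,
and any perfect matching `M` of `𝒮` (encoded as a fixed-point-free involutive permutation
`σ`, with `w(M) = (Σ_x w(x, σ x))/2`):
`w(M) ≤ (2/n)·Σ_{{x,y}⊆T} w(x,y) + (1/n)·Σ_{x∈T, y∈𝒮∖T} w(x,y)`. -/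
theorem stmt_6 {S : Type*} [Fintype S] [DecidableEq S]
    (w : S → S → ℝ)
    (hnonneg : ∀ x y, 0 ≤ w x y)
    (hsymm : ∀ x y, w x y = w y x)
    (hmetric : ∀ x y z : S, x ≠ y → y ≠ z → x ≠ z → w x y ≤ w x z + w z y)
    (T : Finset S) (n : ℕ) (hT : T.card = n) (hn : 1 ≤ n)
    (σ : Equiv.Perm S) (hinv : ∀ x, σ (σ x) = x) (hfix : ∀ x, σ x ≠ x) :
    (∑ x, w x (σ x)) / 2
      ≤ (2 / (n : ℝ)) * ((∑ p ∈ T.offDiag, w p.1 p.2) / 2)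
        + (1 / (n : ℝ)) * (∑ x ∈ T, ∑ y ∈ Tᶜ, w x y) :=
  stmt_6_general w hsymm hmetric T n hT hn σ hfix
end

section
/- Let w be metric weights on a finite set 𝒩 of N points with N even. Then every perfect matching M of 𝒩 satisfies w(M) ≤ (2/N)·Σ_{ {x,y} ⊆ 𝒩 } w(x,y). Consequently, the maximum-weight perfect matching weighs at most twice the average weight of a uniformly random perfect matching of 𝒩; i.e., picking a perfect matching uniformly at random is a 2-approximation in expectation for the Maximum Weighted Matching problem under metric weights. -/
/-!
Summing the triangle inequality `w x y ≤ w x z + w z y` over the `N - 2` points `z ∉ {x, y}`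
gives `N * w x y ≤ (row sum at x) + (column sum at y)`; summing this along a fixed-point-free
permutation `σ` bounds `N * ∑ x, w x (σ x)` by twice the total off-diagonal weight. In turn,
conjugation by the transposition `swap y y'` shows that every `y ≠ x` is the partner of `x` in
the same number of perfect matchings, so the average of `∑ x, w x (τ x)` over perfect
matchings `τ` is exactly the total off-diagonal weight divided by `N - 1`.
-/

open Finset Equiv

section OffDiag

variable {V M : Type*} [Fintype V] [DecidableEq V] [AddCommMonoid M]

theorem sum_offDiag_univ_eq_sum_sum_erase (f : V → V → M) :
    ∑ p ∈ (univ : Finset V).offDiag, f p.1 p.2 = ∑ x, ∑ y ∈ univ.erase x, f x y :=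
  sum_finset_product' _ _ _ fun p => by simp [ne_comm]

theorem sum_offDiag_univ_eq_sum_sum_erase_right (f : V → V → M) :
    ∑ p ∈ (univ : Finset V).offDiag, f p.1 p.2 = ∑ y, ∑ x ∈ univ.erase y, f x y :=
  sum_finset_product_right' _ _ _ fun p => by simp

end OffDiag

section Metric

variable {V : Type*} [Fintype V] [DecidableEq V] (w : V → V → ℝ)

theorem card_mul_le_sum_erase_add_sum_erase
    (hmetric : ∀ x y z : V, x ≠ y → y ≠ z → x ≠ z → w x y ≤ w x z + w z y)
    {x y : V} (hxy : x ≠ y) :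
    (Fintype.card V : ℝ) * w x y ≤ ∑ z ∈ univ.erase x, w x z + ∑ z ∈ univ.erase y, w z y := by
  set C := (univ.erase x).erase y
  have hy_mem : y ∈ univ.erase x := mem_erase.2 ⟨hxy.symm, mem_univ _⟩
  have hx_mem : x ∈ univ.erase y := mem_erase.2 ⟨hxy, mem_univ _⟩
  have hC : (#C : ℝ) + 2 = Fintype.card V := by
    have h₁ : #C + 1 = #(univ.erase x) := card_erase_add_one hy_mem
    have h₂ := card_erase_add_one (mem_univ x)
    rw [card_univ] at h₂
    exact_mod_cast (by omega : #C + 2 = Fintype.card V)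
  have htri : #C • w x y ≤ ∑ z ∈ C, w x z + ∑ z ∈ C, w z y := by
    rw [← sum_add_distrib, ← sum_const]
    refine sum_le_sum fun z hz => ?_
    obtain ⟨hzy, hzx⟩ : z ≠ y ∧ z ≠ x := by simpa [C] using hz
    exact hmetric x y z hxy (Ne.symm hzy) (Ne.symm hzx)
  rw [← add_sum_erase _ _ hy_mem, ← add_sum_erase _ _ hx_mem, erase_right_comm (a := y), ← hC]
  rw [nsmul_eq_mul] at htri
  linarith

theorem card_mul_sum_le_two_mul_sum_offDiag
    (hmetric : ∀ x y z : V, x ≠ y → y ≠ z → x ≠ z → w x y ≤ w x z + w z y)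
    (σ : Perm V) (hσ : ∀ x, σ x ≠ x) :
    (Fintype.card V : ℝ) * ∑ x, w x (σ x) ≤ 2 * ∑ p ∈ (univ : Finset V).offDiag, w p.1 p.2 :=
  calc (Fintype.card V : ℝ) * ∑ x, w x (σ x) = ∑ x, (Fintype.card V : ℝ) * w x (σ x) :=
        mul_sum _ _ _
    _ ≤ ∑ x, (∑ z ∈ univ.erase x, w x z + ∑ z ∈ univ.erase (σ x), w z (σ x)) :=
      sum_le_sum fun x _ => card_mul_le_sum_erase_add_sum_erase w hmetric (hσ x).symm
    _ = 2 * ∑ p ∈ (univ : Finset V).offDiag, w p.1 p.2 := by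
      rw [sum_add_distrib, Equiv.sum_comp σ (fun y => ∑ z ∈ univ.erase y, w z y),
        ← sum_offDiag_univ_eq_sum_sum_erase, ← sum_offDiag_univ_eq_sum_sum_erase_right, two_mul]

end Metric

section PerfectMatching

variable (V : Type*) [Fintype V] [DecidableEq V]

def perfectMatchings : Finset (Perm V) :=
  univ.filter fun τ => (∀ v, τ (τ v) = v) ∧ ∀ v, τ v ≠ v

variable {V}

theorem mem_perfectMatchings {τ : Perm V} :
    τ ∈ perfectMatchings V ↔ (∀ v, τ (τ v) = v) ∧ ∀ v, τ v ≠ v := by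
  simp [perfectMatchings]

theorem apply_mem_erase_of_mem_perfectMatchings {τ : Perm V} (hτ : τ ∈ perfectMatchings V)
    (x : V) : τ x ∈ univ.erase x :=
  mem_erase.2 ⟨(mem_perfectMatchings.1 hτ).2 x, mem_univ _⟩

theorem conj_mem_perfectMatchings (g : Perm V) {τ : Perm V} (hτ : τ ∈ perfectMatchings V) :
    g * τ * g⁻¹ ∈ perfectMatchings V := by
  obtain ⟨hinv, hfix⟩ := mem_perfectMatchings.1 hτ
  refine mem_perfectMatchings.2 ⟨fun v => by simp [hinv], fun v hv => hfix (g⁻¹ v) ?_⟩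
  simpa [← Equiv.eq_symm_apply] using hv

theorem card_filter_apply_eq_of_ne {x y y' : V} (hy : y ≠ x) (hy' : y' ≠ x) :
    #{τ ∈ perfectMatchings V | τ x = y} = #{τ ∈ perfectMatchings V | τ x = y'} := by
  have hx : swap y y' x = x := swap_apply_of_ne_of_ne hy.symm hy'.symm
  refine card_nbij' (fun τ => swap y y' * τ * (swap y y')⁻¹)
    (fun τ => swap y y' * τ * (swap y y')⁻¹) (fun τ hτ => ?_) (fun τ hτ => ?_)
    (fun τ _ => by simp [mul_assoc]) (fun τ _ => by simp [mul_assoc])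
  all_goals
    rw [mem_coe, mem_filter] at hτ ⊢
    exact ⟨conj_mem_perfectMatchings _ hτ.1, by simp [hx, hτ.2]⟩

theorem card_filter_apply_mul_card_sub_one {x y : V} (hy : y ≠ x) :
    #{τ ∈ perfectMatchings V | τ x = y} * (Fintype.card V - 1) = #(perfectMatchings V) := by
  rw [card_eq_sum_card_fiberwise fun τ hτ => apply_mem_erase_of_mem_perfectMatchings hτ x,
    sum_const_nat fun y' hy' => card_filter_apply_eq_of_ne (mem_erase.1 hy').1 hy,
    card_erase_of_mem (mem_univ x), card_univ, mul_comm]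

theorem card_sub_one_mul_sum_perfectMatchings {M : Type*} [CommSemiring M] (w : V → V → M) :
    ((Fintype.card V - 1 : ℕ) : M) * ∑ τ ∈ perfectMatchings V, ∑ x, w x (τ x) =
      #(perfectMatchings V) * ∑ p ∈ (univ : Finset V).offDiag, w p.1 p.2 := by
  rw [sum_offDiag_univ_eq_sum_sum_erase, sum_comm, mul_sum, mul_sum]
  refine sum_congr rfl fun x _ => ?_
  rw [← sum_fiberwise_of_maps_to fun τ hτ => apply_mem_erase_of_mem_perfectMatchings hτ x,
    mul_sum, mul_sum]
  refine sum_congr rfl fun y hy => ?_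
  rw [sum_congr rfl fun τ hτ => by rw [(mem_filter.1 hτ).2], sum_const, nsmul_eq_mul,
    ← card_filter_apply_mul_card_sub_one (mem_erase.1 hy).1]
  push_cast
  ring

end PerfectMatching

theorem stmt_7_general {V : Type*} [Fintype V] [DecidableEq V]
    (N : ℕ) (hN : Fintype.card V = N)
    (w : V → V → ℝ)
    (hnonneg : ∀ x y, 0 ≤ w x y)
    (hmetric : ∀ x y z : V, x ≠ y → y ≠ z → x ≠ z → w x y ≤ w x z + w z y)
    (σ : Equiv.Perm V) (hinv : ∀ x, σ (σ x) = x) (hfix : ∀ x, σ x ≠ x) :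
    (∑ x, w x (σ x)) / 2
      ≤ (2 / (N : ℝ)) * ((∑ p ∈ (Finset.univ : Finset V).offDiag, w p.1 p.2) / 2) ∧
    (∑ x, w x (σ x)) / 2
      ≤ 2 * ((∑ τ ∈ Finset.univ.filter
                (fun τ : Equiv.Perm V => (∀ v, τ (τ v) = v) ∧ ∀ v, τ v ≠ v),
              (∑ x, w x (τ x)) / 2)
            / ((Finset.univ.filter
                (fun τ : Equiv.Perm V => (∀ v, τ (τ v) = v) ∧ ∀ v, τ v ≠ v)).card : ℝ)) := by
  subst hN
  change _ ∧ _ ≤ 2 * ((∑ τ ∈ perfectMatchings V, _) / (#(perfectMatchings V) : ℝ))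
  rcases isEmpty_or_nonempty V with hV | ⟨⟨x⟩⟩
  · simp
  have hn : (2 : ℝ) ≤ Fintype.card V := by
    exact_mod_cast Fintype.one_lt_card_iff.2 ⟨x, σ x, (hfix x).symm⟩
  have hP : (0 : ℝ) < #(perfectMatchings V) :=
    Nat.cast_pos.2 (card_pos.2 ⟨σ, mem_perfectMatchings.2 ⟨hinv, hfix⟩⟩)
  have hS : 0 ≤ ∑ x, w x (σ x) := sum_nonneg fun x _ => hnonneg _ _
  have hbound := card_mul_sum_le_two_mul_sum_offDiag w hmetric σ hfix
  have htotal := card_sub_one_mul_sum_perfectMatchings w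
  rw [Nat.cast_pred (Fintype.card_pos_iff.2 ⟨x⟩)] at htotal
  set n : ℝ := (Fintype.card V : ℝ)
  set P : ℝ := (#(perfectMatchings V) : ℝ)
  set S := ∑ x, w x (σ x)
  set T := ∑ p ∈ (univ : Finset V).offDiag, w p.1 p.2
  set A := ∑ τ ∈ perfectMatchings V, ∑ x, w x (τ x)
  constructor
  · rw [div_mul_div_comm, le_div_iff₀ (by positivity)]
    linarith
  · have hSA : (n - 1) * (S * P) ≤ (n - 1) * (2 * A) :=
      calc (n - 1) * (S * P) = ((n - 1) * S) * P := by ring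
        _ ≤ (2 * T) * P := by gcongr ?_ * P; linarith
        _ = (n - 1) * (2 * A) := by linear_combination -2 * htotal
    rw [← sum_div, div_div, mul_div_assoc', le_div_iff₀ (by positivity)]
    linarith [le_of_mul_le_mul_left hSA (by linarith)]

/-- for metric weights on a finite set `𝒩` of `N` points (`N` even), every
perfect matching `M` (a fixed-point-free involutive permutation `σ`) satisfies
`w(M) ≤ (2/N)·Σ_{{x,y}⊆𝒩} w(x,y)`; consequently `w(M)` is at most twice the average
weight of a uniformly random perfect matching, so a uniformly random perfect matching is a
2-approximation in expectation. -/
theorem stmt_7 {V : Type*} [Fintype V] [DecidableEq V]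
    (N : ℕ) (hN : Fintype.card V = N) (heven : Even N)
    (w : V → V → ℝ)
    (hnonneg : ∀ x y, 0 ≤ w x y)
    (hsymm : ∀ x y, w x y = w y x)
    (hmetric : ∀ x y z : V, x ≠ y → y ≠ z → x ≠ z → w x y ≤ w x z + w z y)
    (σ : Equiv.Perm V) (hinv : ∀ x, σ (σ x) = x) (hfix : ∀ x, σ x ≠ x) :
    (∑ x, w x (σ x)) / 2
      ≤ (2 / (N : ℝ)) * ((∑ p ∈ (Finset.univ : Finset V).offDiag, w p.1 p.2) / 2) ∧
    (∑ x, w x (σ x)) / 2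
      ≤ 2 * ((∑ τ ∈ Finset.univ.filter
                (fun τ : Equiv.Perm V => (∀ v, τ (τ v) = v) ∧ ∀ v, τ v ≠ v),
              (∑ x, w x (τ x)) / 2)
            / ((Finset.univ.filter
                (fun τ : Equiv.Perm V => (∀ v, τ (τ v) = v) ∧ ∀ v, τ v ≠ v)).card : ℝ)) :=
  stmt_7_general N hN w hnonneg hmetric σ hinv hfix
end

section
/- There exist a strict preference profile P on a set of 4 agents and two metric weight functions w_1 and w_2, both consistent with P, such that every perfect matching M of the 4 agents satisfies w_1(M) ≤ (2/3)·OPT(w_1) or w_2(M) ≤ (2/3)·OPT(w_2), where OPT(w_i) is the maximum weight of a perfect matching under w_i. Consequently, no deterministic ordinal algorithm for Maximum Weighted Matching with metric weights can achieve an approximation factor better than 3/2. -/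
/-- `P i j k` means agent `i` strictly prefers agent `j` to agent `k`. `P` is a strict
preference profile if, for every agent `i`, `P i` is a strict total order on the other
agents. -/
def IsPrefProfile {V : Type*} (P : V → V → V → Prop) : Prop :=
  ∀ i : V,
    (∀ j k, P i j k → j ≠ i ∧ k ≠ i ∧ j ≠ k) ∧
    (∀ j k, j ≠ i → k ≠ i → j ≠ k → (P i j k ↔ ¬ P i k j)) ∧
    (∀ j k l, P i j k → P i k l → P i j l)

/-- `w` is consistent with the preference profile `P`: whenever `i` prefers `j` to `k`,
`w i j ≥ w i k`. -/
def Consistent {V : Type*} (P : V → V → V → Prop) (w : V → V → ℝ) : Prop :=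
  ∀ i j k, P i j k → w i k ≤ w i j

/-- A perfect matching encoded as a fixed-point-free involutive permutation. -/
def IsPM {V : Type*} (σ : Equiv.Perm V) : Prop :=
  (∀ x, σ (σ x) = x) ∧ ∀ x, σ x ≠ x

/-- The weight of the perfect matching `σ`: each edge is counted twice in the sum. -/
noncomputable def pmWeight {V : Type*} [Fintype V] (w : V → V → ℝ) (σ : Equiv.Perm V) : ℝ :=
  (∑ x, w x (σ x)) / 2

/-- `v` is the maximum weight of a perfect matching under `w`. -/
def IsOptVal {V : Type*} [Fintype V] (w : V → V → ℝ) (v : ℝ) : Prop :=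
  (∃ σ : Equiv.Perm V, IsPM σ ∧ pmWeight w σ = v) ∧
  ∀ σ : Equiv.Perm V, IsPM σ → pmWeight w σ ≤ v

-- auxiliary definitions
def myP : Fin 4 → Fin 4 → Fin 4 → Prop := fun i j k => j ≠ i ∧ k ≠ i ∧ j < k

instance (i j k : Fin 4) : Decidable (myP i j k) := by unfold myP; infer_instance

instance {V : Type*} [Fintype V] [DecidableEq V] (σ : Equiv.Perm V) :
    Decidable (IsPM σ) := by unfold IsPM; infer_instance

def n1 : Fin 4 → Fin 4 → ℕ := fun x y => if (x = 0 ∧ y = 1) ∨ (x = 1 ∧ y = 0) then 2 else 1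
def n2 : Fin 4 → Fin 4 → ℕ := fun x y => if (x = 2 ∧ y = 3) ∨ (x = 3 ∧ y = 2) then 0 else 1

def mA : Equiv.Perm (Fin 4) := Equiv.swap 0 1 * Equiv.swap 2 3
def mB : Equiv.Perm (Fin 4) := Equiv.swap 0 2 * Equiv.swap 1 3
def mC : Equiv.Perm (Fin 4) := Equiv.swap 0 3 * Equiv.swap 1 2

lemma classify : ∀ σ : Equiv.Perm (Fin 4), IsPM σ → σ = mA ∨ σ = mB ∨ σ = mC := by decide

lemma pmA : IsPM mA := by decide
lemma pmB : IsPM mB := by decide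
lemma pmC : IsPM mC := by decide

lemma sumw (n : Fin 4 → Fin 4 → ℕ) (σ : Equiv.Perm (Fin 4)) :
    pmWeight (fun x y => (n x y : ℝ)) σ =
      ((n 0 (σ 0) + n 1 (σ 1) + n 2 (σ 2) + n 3 (σ 3) : ℕ) : ℝ) / 2 := by
  unfold pmWeight
  rw [Fin.sum_univ_four]
  push_cast
  ring

lemma sA1 : n1 0 (mA 0) + n1 1 (mA 1) + n1 2 (mA 2) + n1 3 (mA 3) = 6 := by decide
lemma sB1 : n1 0 (mB 0) + n1 1 (mB 1) + n1 2 (mB 2) + n1 3 (mB 3) = 4 := by decide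
lemma sC1 : n1 0 (mC 0) + n1 1 (mC 1) + n1 2 (mC 2) + n1 3 (mC 3) = 4 := by decide
lemma sA2 : n2 0 (mA 0) + n2 1 (mA 1) + n2 2 (mA 2) + n2 3 (mA 3) = 2 := by decide
lemma sB2 : n2 0 (mB 0) + n2 1 (mB 1) + n2 2 (mB 2) + n2 3 (mB 3) = 4 := by decide
lemma sC2 : n2 0 (mC 0) + n2 1 (mC 1) + n2 2 (mC 2) + n2 3 (mC 3) = 4 := by decide

/-- there are a strict preference profile on 4 agents and two metric weight
functions `w₁, w₂` consistent with it such that every perfect matching is at most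
`(2/3)·OPT` for `w₁` or for `w₂`; hence no deterministic ordinal algorithm beats `3/2`
for metric Maximum Weighted Matching. -/
theorem stmt_9 :
    ∃ (P : Fin 4 → Fin 4 → Fin 4 → Prop) (w1 w2 : Fin 4 → Fin 4 → ℝ) (opt1 opt2 : ℝ),
      IsPrefProfile P ∧
      (∀ x y, 0 ≤ w1 x y) ∧ (∀ x y, w1 x y = w1 y x) ∧
      (∀ x y z : Fin 4, x ≠ y → y ≠ z → x ≠ z → w1 x y ≤ w1 x z + w1 z y) ∧
      Consistent P w1 ∧
      (∀ x y, 0 ≤ w2 x y) ∧ (∀ x y, w2 x y = w2 y x) ∧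
      (∀ x y z : Fin 4, x ≠ y → y ≠ z → x ≠ z → w2 x y ≤ w2 x z + w2 z y) ∧
      Consistent P w2 ∧
      IsOptVal w1 opt1 ∧ IsOptVal w2 opt2 ∧
      ∀ σ : Equiv.Perm (Fin 4), IsPM σ →
        (pmWeight w1 σ ≤ (2 / 3) * opt1 ∨ pmWeight w2 σ ≤ (2 / 3) * opt2) := by
  refine ⟨myP, fun x y => (n1 x y : ℝ), fun x y => (n2 x y : ℝ), 3, 2,
    ?_, ?_, ?_, ?_, ?_, ?_, ?_, ?_, ?_, ?_, ?_, ?_⟩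
  · intro i
    refine ⟨?_, ?_, ?_⟩ <;> revert i <;> decide
  · intro x y; positivity
  · intro x y
    have h : n1 x y = n1 y x := by revert x y; decide
    show ((n1 x y : ℕ) : ℝ) = ((n1 y x : ℕ) : ℝ)
    exact_mod_cast h
  · intro x y z hxy hyz hxz
    have h : n1 x y ≤ n1 x z + n1 z y := by revert hxy hyz hxz; revert x y z; decide
    show ((n1 x y : ℕ) : ℝ) ≤ ((n1 x z : ℕ) : ℝ) + ((n1 z y : ℕ) : ℝ)
    exact_mod_cast h
  · intro i j k h
    have h2 : n1 i k ≤ n1 i j := by revert h; revert i j k; decide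
    show ((n1 i k : ℕ) : ℝ) ≤ ((n1 i j : ℕ) : ℝ)
    exact_mod_cast h2
  · intro x y; positivity
  · intro x y
    have h : n2 x y = n2 y x := by revert x y; decide
    show ((n2 x y : ℕ) : ℝ) = ((n2 y x : ℕ) : ℝ)
    exact_mod_cast h
  · intro x y z hxy hyz hxz
    have h : n2 x y ≤ n2 x z + n2 z y := by revert hxy hyz hxz; revert x y z; decide
    show ((n2 x y : ℕ) : ℝ) ≤ ((n2 x z : ℕ) : ℝ) + ((n2 z y : ℕ) : ℝ)
    exact_mod_cast h
  · intro i j k h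
    have h2 : n2 i k ≤ n2 i j := by revert h; revert i j k; decide
    show ((n2 i k : ℕ) : ℝ) ≤ ((n2 i j : ℕ) : ℝ)
    exact_mod_cast h2
  · refine ⟨⟨mA, pmA, ?_⟩, ?_⟩
    · rw [sumw, sA1]; norm_num
    · intro σ hσ
      rcases classify σ hσ with h | h | h <;> subst h
      · rw [sumw, sA1]; norm_num
      · rw [sumw, sB1]; norm_num
      · rw [sumw, sC1]; norm_num
  · refine ⟨⟨mB, pmB, ?_⟩, ?_⟩
    · rw [sumw, sB2]; norm_num
    · intro σ hσ
      rcases classify σ hσ with h | h | h <;> subst h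
      · rw [sumw, sA2]; norm_num
      · rw [sumw, sB2]; norm_num
      · rw [sumw, sC2]; norm_num
  · intro σ hσ
    rcases classify σ hσ with h | h | h <;> subst h
    · right; rw [sumw, sA2]; norm_num
    · left; rw [sumw, sB1]; norm_num
    · left; rw [sumw, sC1]; norm_num
end

section
/- For every integer N ≥ 1 there exist a strict preference profile P on a set of 2N agents {a_1,b_1,…,a_N,b_N} and metric weight functions w_1,…,w_N, each consistent with P, where w_i assigns weight 2 to the pair {a_i,b_i} and weight 1 to every other pair, such that: for every probability distribution p over single edges (matchings of size 1) on the 2N agents, there exists an index i with E_{e∼p}[w_i(e)] ≤ 1 + 1/N, while the maximum-weight 1-matching under w_i has weight 2. Consequently, no randomized ordinal algorithm for the Max 1-Matching problem achieves an approximation factor better than 2N/(N+1), and hence no factor better than 2 holds for Max k-Matching in general as N → ∞. -/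
namespace Stmt11Aux

variable {N : ℕ}

/-- rank of agent `j` in the preferences of agent `a` (smaller = better) -/
def rk (a j : Fin N × Bool) : ℕ :=
  if j = (a.1, !a.2) then 0 else 1 + 2 * j.1.val + (if j.2 then 1 else 0)

lemma rk_inj (a : Fin N × Bool) {j k : Fin N × Bool} (h : rk a j = rk a k) : j = k := by
  unfold rk at h
  by_cases hj : j = (a.1, !a.2) <;> by_cases hk : k = (a.1, !a.2)
  · exact hj.trans hk.symm
  · rw [if_pos hj, if_neg hk] at h; omega
  · rw [if_neg hj, if_pos hk] at h; omega
  · rw [if_neg hj, if_neg hk] at h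
    have h2 : j.2 = k.2 := by
      cases hj2 : j.2 <;> cases hk2 : k.2 <;> simp [hj2, hk2] at h ⊢ <;> omega
    have h1 : j.1 = k.1 := by
      cases hj2 : j.2 <;> cases hk2 : k.2 <;> simp [hj2, hk2] at h <;>
        exact Fin.ext (by omega)
    exact Prod.ext h1 h2

/-- weight function -/
noncomputable def w (i : Fin N) (x y : Fin N × Bool) : ℝ :=
  if (x = (i, false) ∧ y = (i, true)) ∨ (x = (i, true) ∧ y = (i, false)) then 2
  else if x = y then 0 else 1

lemma w_ge_one (i : Fin N) {x y : Fin N × Bool} (h : x ≠ y) : 1 ≤ w i x y := by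
  unfold w
  rw [if_neg h]
  split_ifs <;> norm_num

lemma w_symm (i : Fin N) (x y : Fin N × Bool) : w i x y = w i y x := by
  unfold w
  have hc : ((x = (i, false) ∧ y = (i, true)) ∨ (x = (i, true) ∧ y = (i, false))) ↔
      ((y = (i, false) ∧ x = (i, true)) ∨ (y = (i, true) ∧ x = (i, false))) := by tauto
  have he : (x = y) ↔ (y = x) := eq_comm
  rw [if_congr hc rfl rfl, if_congr he rfl rfl]

lemma w_le_two (i : Fin N) (x y : Fin N × Bool) : w i x y ≤ 2 := by
  unfold w; split_ifs <;> norm_num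

lemma w_le_bound (i : Fin N) (x y : Fin N × Bool) :
    w i x y ≤ 1 + (if i = x.1 then (1:ℝ) else 0) := by
  unfold w
  rcases eq_or_ne i x.1 with h | h
  · split_ifs <;> norm_num
  · have hnc : ¬((x = (i, false) ∧ y = (i, true)) ∨ (x = (i, true) ∧ y = (i, false))) := by
      rintro (⟨hx, -⟩ | ⟨hx, -⟩) <;> exact h (by rw [hx])
    rw [if_neg hnc, if_neg h]
    split_ifs <;> norm_num

end Stmt11Aux

open Stmt11Aux in
/-- for each `N ≥ 1` there are a strict preference profile `P` on the `2N`
agents `Fin N × Bool` (agent `aᵢ = (i, false)`, `bᵢ = (i, true)`) and metric weight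
functions `w i` consistent with `P`, where `w i` gives weight `2` to the pair `{aᵢ, bᵢ}`
and `1` to every other pair, such that for every probability distribution `p` over single
edges (pairs of distinct agents) there is an index `i` with expected weight
`E_p[w i] ≤ 1 + 1/N`, while the maximum-weight `1`-matching under `w i` has weight `2`.
Hence no randomized ordinal algorithm beats `2N/(N+1)` for Max `1`-Matching. -/
theorem stmt_11 (N : ℕ) (hN : 1 ≤ N) :
    ∃ (P : (Fin N × Bool) → (Fin N × Bool) → (Fin N × Bool) → Prop)
      (w : Fin N → (Fin N × Bool) → (Fin N × Bool) → ℝ),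
      IsPrefProfile P ∧
      (∀ i : Fin N,
        (∀ x y, 0 ≤ w i x y) ∧
        (∀ x y, w i x y = w i y x) ∧
        (∀ x y z : Fin N × Bool, x ≠ y → y ≠ z → x ≠ z → w i x y ≤ w i x z + w i z y) ∧
        (∀ a b c, P a b c → w i a c ≤ w i a b) ∧
        w i (i, false) (i, true) = 2 ∧
        (∀ x y : Fin N × Bool, x ≠ y →
          ¬((x = (i, false) ∧ y = (i, true)) ∨ (x = (i, true) ∧ y = (i, false))) →
          w i x y = 1)) ∧
      (∀ i : Fin N, ∀ x y : Fin N × Bool, x ≠ y → w i x y ≤ 2) ∧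
      (∀ p : (Fin N × Bool) → (Fin N × Bool) → ℝ,
        (∀ x y, 0 ≤ p x y) → (∀ x, p x x = 0) → (∑ x, ∑ y, p x y) = 1 →
        ∃ i : Fin N, (∑ x, ∑ y, p x y * w i x y) ≤ 1 + 1 / (N : ℝ)) := by
  refine ⟨fun a j k => j ≠ a ∧ k ≠ a ∧ rk a j < rk a k, Stmt11Aux.w, ?_, ?_, ?_, ?_⟩
  · -- IsPrefProfile
    intro i
    refine ⟨?_, ?_, ?_⟩
    · rintro j k ⟨hj, hk, hlt⟩
      exact ⟨hj, hk, fun e => by subst e; exact lt_irrefl _ hlt⟩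
    · intro j k hj hk hjk
      constructor
      · rintro ⟨-, -, h⟩ ⟨-, -, h'⟩
        exact absurd (h.trans h') (lt_irrefl _)
      · intro hn
        refine ⟨hj, hk, ?_⟩
        have h1 : ¬ rk i k < rk i j := fun h => hn ⟨hk, hj, h⟩
        have h2 : rk i j ≠ rk i k := fun h => hjk (rk_inj i h)
        omega
    · rintro j k l ⟨hj, -, h1⟩ ⟨-, hl, h2⟩
      exact ⟨hj, hl, h1.trans h2⟩
  · -- weight function properties
    intro i
    refine ⟨?_, ?_, ?_, ?_, ?_, ?_⟩
    · intro x y; unfold Stmt11Aux.w; split_ifs <;> norm_num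
    · intro x y; exact w_symm i x y
    · intro x y z hxy hyz hxz
      have := w_ge_one i hxz
      have := w_ge_one i hyz.symm
      have := w_le_two i x y
      linarith
    · rintro a b c ⟨hb, hc, hlt⟩
      by_cases hcond :
          (a = (i, false) ∧ c = (i, true)) ∨ (a = (i, true) ∧ c = (i, false))
      · exfalso
        have hcp : c = (a.1, !a.2) := by
          rcases hcond with ⟨ha, hcc⟩ | ⟨ha, hcc⟩ <;> subst ha <;> subst hcc <;> rfl
        have : rk a c = 0 := by unfold rk; rw [if_pos hcp]
        omega
      · have hac : a ≠ c := fun e => hc e.symm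
        have h1 : Stmt11Aux.w i a c = 1 := by
          unfold Stmt11Aux.w; rw [if_neg hcond, if_neg hac]
        rw [h1]
        exact w_ge_one i (fun e => hb e.symm)
    · unfold Stmt11Aux.w; norm_num
    · intro x y hxy hcond
      unfold Stmt11Aux.w; rw [if_neg hcond, if_neg hxy]
  · intro i x y _; exact w_le_two i x y
  · -- probabilistic part
    intro p hp hdiag hsum
    by_contra hcon
    push_neg at hcon
    have hN0 : (N : ℝ) ≠ 0 := Nat.cast_ne_zero.mpr (by omega)
    have hsum_w : ∀ x : Fin N × Bool,
        (∑ i : Fin N, (1 + if i = x.1 then (1:ℝ) else 0)) = (N : ℝ) + 1 := by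
      intro x
      rw [Finset.sum_add_distrib, Finset.sum_const, Finset.sum_ite_eq']
      simp
    have key : (∑ i : Fin N, ∑ x, ∑ y, p x y * Stmt11Aux.w i x y) ≤ (N : ℝ) + 1 := by
      have h1 : (∑ i : Fin N, ∑ x, ∑ y, p x y * Stmt11Aux.w i x y)
          = ∑ x, ∑ y, p x y * ∑ i : Fin N, Stmt11Aux.w i x y := by
        rw [Finset.sum_comm]
        refine Finset.sum_congr rfl fun x _ => ?_
        rw [Finset.sum_comm]
        exact Finset.sum_congr rfl fun y _ => (Finset.mul_sum _ _ _).symm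
      rw [h1]
      calc (∑ x, ∑ y, p x y * ∑ i : Fin N, Stmt11Aux.w i x y)
          ≤ ∑ x, ∑ y, p x y * ((N : ℝ) + 1) := by
            refine Finset.sum_le_sum fun x _ => Finset.sum_le_sum fun y _ => ?_
            refine mul_le_mul_of_nonneg_left ?_ (hp x y)
            calc (∑ i : Fin N, Stmt11Aux.w i x y)
                ≤ ∑ i : Fin N, (1 + if i = x.1 then (1:ℝ) else 0) :=
                  Finset.sum_le_sum fun i _ => w_le_bound i x y
              _ = (N : ℝ) + 1 := hsum_w x
        _ = (N : ℝ) + 1 := by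
            simp_rw [← Finset.sum_mul]
            rw [hsum, one_mul]
    have hne : (Finset.univ : Finset (Fin N)).Nonempty := ⟨⟨0, hN⟩, Finset.mem_univ _⟩
    have hlt : (N : ℝ) + 1 < ∑ i : Fin N, ∑ x, ∑ y, p x y * Stmt11Aux.w i x y := by
      have h2 := Finset.sum_lt_sum_of_nonempty hne (fun i _ => hcon i)
      have h3 : (∑ _i : Fin N, (1 + 1 / (N : ℝ))) = (N : ℝ) + 1 := by
        rw [Finset.sum_const, Finset.card_univ, Fintype.card_fin, nsmul_eq_mul]
        field_simp
      linarith [h2, h3.symm.le, h3.le]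
    linarith
end

section
/- Let w be metric weights on a finite set 𝒩 of N points, let k divide N with c = N/k even, let M be a perfect matching of 𝒩, let M* be a maximum-weight perfect matching of 𝒩, and suppose w(M*) ≤ α·w(M) for some α ≥ 1. Let S_1,…,S_k be any partition of 𝒩 into k sets of size c such that both endpoints of every edge of M lie in the same part. Then for every partition O_1,…,O_k of 𝒩 into k sets of size c, Σ_{i=1}^k Σ_{ {x,y} ⊆ O_i } w(x,y) ≤ 2α · Σ_{i=1}^k Σ_{ {x,y} ⊆ S_i } w(x,y). In particular, an α-approximate perfect matching yields a 2α-approximation for the Max k-Sum problem. -/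
/-- Round-robin matching on `Option (ZMod m)`, round `r`. -/
def RRmatch {m : ℕ} (r : ZMod m) : Option (ZMod m) → Option (ZMod m)
  | none => some r
  | some x => if x = r then none else some (2 * r - x)

lemma half_spec {m : ℕ} (hm : Odd m) :
    (2 : ZMod m) * (((m + 1) / 2 : ℕ) : ZMod m) = 1 := by
  have h2 : 2 * ((m + 1) / 2) = m + 1 :=
    Nat.mul_div_cancel' (even_iff_two_dvd.mp (Odd.add_one hm))
  calc (2 : ZMod m) * (((m + 1) / 2 : ℕ) : ZMod m)
      = ((2 * ((m + 1) / 2) : ℕ) : ZMod m) := by push_cast; ring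
    _ = ((m + 1 : ℕ) : ZMod m) := by rw [h2]
    _ = 1 := by push_cast [ZMod.natCast_self]; ring

lemma cancel_two {m : ℕ} (hm : Odd m) {x y : ZMod m} (h : 2 * x = 2 * y) : x = y := by
  have h1 := half_spec hm
  set hf := (((m + 1) / 2 : ℕ) : ZMod m) with hhf
  calc x = ((2 : ZMod m) * hf) * x := by rw [h1, one_mul]
    _ = hf * (2 * x) := by ring
    _ = hf * (2 * y) := by rw [h]
    _ = ((2 : ZMod m) * hf) * y := by ring
    _ = y := by rw [h1, one_mul]

lemma RRmatch_ne {m : ℕ} (hm : Odd m) (r : ZMod m) (a : Option (ZMod m)) :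
    RRmatch r a ≠ a := by
  cases a with
  | none => simp [RRmatch]
  | some x =>
    by_cases hx : x = r
    · simp [RRmatch, hx]
    · simp only [RRmatch, if_neg hx, ne_eq, Option.some.injEq]
      intro h
      exact hx (cancel_two hm (by linear_combination -h))

lemma RRmatch_invol {m : ℕ} (hm : Odd m) (r : ZMod m) (a : Option (ZMod m)) :
    RRmatch r (RRmatch r a) = a := by
  cases a with
  | none => simp [RRmatch]
  | some x =>
    by_cases hx : x = r
    · simp [RRmatch, hx]
    · have h1 : 2 * r - x ≠ r := by
        intro h
        exact hx (by linear_combination -h)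
      simp only [RRmatch, if_neg hx, if_neg h1, Option.some.injEq]
      ring

/-- Given an ordered pair of distinct elements, the round in which it is matched. -/
def RRidx {m : ℕ} : Option (ZMod m) × Option (ZMod m) → ZMod m
  | (none, some y) => y
  | (some x, none) => x
  | (some x, some y) => (((m + 1) / 2 : ℕ) : ZMod m) * (x + y)
  | (none, none) => 0

lemma RR_cover {m : ℕ} [NeZero m] (hm : Odd m) (g : Option (ZMod m) → Option (ZMod m) → ℝ) :
    ∑ p ∈ (Finset.univ : Finset (Option (ZMod m))).offDiag, g p.1 p.2
      = ∑ r : ZMod m, ∑ a : Option (ZMod m), g a (RRmatch r a) := by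
  have h1 := half_spec hm
  set hf := (((m + 1) / 2 : ℕ) : ZMod m) with hhf
  have hprod : ∑ q : ZMod m × Option (ZMod m), g q.2 (RRmatch q.1 q.2)
      = ∑ r : ZMod m, ∑ a : Option (ZMod m), g a (RRmatch r a) := Fintype.sum_prod_type _
  rw [← hprod]
  symm
  apply Finset.sum_nbij' (i := fun q : ZMod m × Option (ZMod m) => (q.2, RRmatch q.1 q.2))
    (j := fun p : Option (ZMod m) × Option (ZMod m) => (RRidx p, p.1))
  · intro q _
    simp only [Finset.mem_offDiag, Finset.mem_univ, true_and]
    exact (RRmatch_ne hm q.1 q.2).symm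
  · intro p _; exact Finset.mem_univ _
  · rintro ⟨r, a⟩ _
    cases a with
    | none => simp [RRmatch, RRidx]
    | some x =>
      by_cases hx : x = r
      · simp [RRmatch, RRidx, hx]
      · simp only [RRmatch, if_neg hx, RRidx, ← hhf, Prod.mk.injEq]
        exact ⟨by linear_combination r * h1, trivial⟩
  · rintro ⟨a, b⟩ hab
    simp only [Finset.mem_offDiag, Finset.mem_univ, true_and] at hab
    cases a with
    | none =>
      cases b with
      | none => exact absurd rfl hab
      | some y => simp [RRmatch, RRidx]
    | some x =>
      cases b with
      | none => simp [RRmatch, RRidx]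
      | some y =>
        have hxy : x ≠ y := by simpa using hab
        have h2 : (2 : ZMod m) * (hf * (x + y)) = x + y := by
          calc (2 : ZMod m) * (hf * (x + y)) = (2 * hf) * (x + y) := by ring
            _ = x + y := by rw [h1, one_mul]
        have hx : x ≠ hf * (x + y) := by
          intro h
          exact hxy (by linear_combination 2 * h + h2)
        simp only [RRmatch, RRidx, ← hhf, if_neg hx, Prod.mk.injEq, Option.some.injEq]
        exact ⟨trivial, by linear_combination h2⟩
  · rintro ⟨r, a⟩ _
    rfl

lemma sum_offDiag_sub {β : Type*} [DecidableEq β] (s : Finset β) (F : β → β → ℝ) :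
    ∑ p ∈ s.offDiag, F p.1 p.2 = ∑ x ∈ s, (∑ y ∈ s, F x y - F x x) := by
  have hsplit : ∑ p ∈ s ×ˢ s, F p.1 p.2
      = ∑ p ∈ s.diag, F p.1 p.2 + ∑ p ∈ s.offDiag, F p.1 p.2 := by
    rw [← Finset.sum_union (Finset.disjoint_diag_offDiag s), Finset.diag_union_offDiag]
  have hdiag : ∑ p ∈ s.diag, F p.1 p.2 = ∑ x ∈ s, F x x := Finset.sum_diag s _
  have hprod : ∑ p ∈ s ×ˢ s, F p.1 p.2 = ∑ x ∈ s, ∑ y ∈ s, F x y := by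
    rw [Finset.sum_product]
  rw [Finset.sum_sub_distrib]
  rw [hprod, hdiag] at hsplit
  linarith

lemma sum_finset_equiv {α β : Type*} [Fintype α] (s : Finset β) (e : α ≃ ↥s) (f : β → ℝ) :
    ∑ x ∈ s, f x = ∑ a : α, f ↑(e a) := by
  rw [← Finset.sum_coe_sort s f]
  exact (Equiv.sum_comp e (fun x : ↥s => f ↑x)).symm

lemma sum_offDiag_equiv {α β : Type*} [Fintype α] [DecidableEq α] [DecidableEq β]
    (s : Finset β) (e : α ≃ ↥s) (F : β → β → ℝ) :
    ∑ p ∈ s.offDiag, F p.1 p.2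
      = ∑ p ∈ (Finset.univ : Finset α).offDiag, F ↑(e p.1) ↑(e p.2) := by
  calc ∑ p ∈ s.offDiag, F p.1 p.2
      = ∑ x ∈ s, (∑ y ∈ s, F x y - F x x) := sum_offDiag_sub s F
    _ = ∑ a : α, (∑ y ∈ s, F ↑(e a) y - F ↑(e a) ↑(e a)) := sum_finset_equiv s e _
    _ = ∑ a : α, (∑ b : α, F ↑(e a) ↑(e b) - F ↑(e a) ↑(e a)) := by
        apply Finset.sum_congr rfl
        intro a _
        rw [sum_finset_equiv s e (fun y => F ↑(e a) y)]
    _ = ∑ p ∈ (Finset.univ : Finset α).offDiag, F ↑(e p.1) ↑(e p.2) :=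
        (sum_offDiag_sub Finset.univ (fun a b => F ↑(e a) ↑(e b))).symm

lemma partition_sum {V : Type*} [Fintype V] [DecidableEq V] {k : ℕ} (P : Fin k → Finset V)
    (hd : ∀ i j, i ≠ j → Disjoint (P i) (P j)) (hc : ∀ x, ∃ i, x ∈ P i) (h : V → ℝ) :
    ∑ i, ∑ x ∈ P i, h x = ∑ x, h x := by
  rw [← Finset.sum_biUnion]
  · apply Finset.sum_congr _ (fun _ _ => rfl)
    ext x
    simp only [Finset.mem_biUnion, Finset.mem_univ, true_and, iff_true]
    exact hc x
  · intro i _ j _ hij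
    exact hd i j hij

/-- metric weights on `𝒩` with `N = k·c` points (`c` even), `σ` a perfect
matching (fixed-point-free involution), `σ*` a maximum-weight perfect matching with
`w(M*) ≤ α·w(M)`, `S₁,…,S_k` a partition into parts of size `c` such that both endpoints
of each matching edge lie in the same part.  Then every partition `O₁,…,O_k` into parts of
size `c` satisfies `Σᵢ Σ_{{x,y}⊆Oᵢ} w ≤ 2α · Σᵢ Σ_{{x,y}⊆Sᵢ} w`: an `α`-approximate
perfect matching yields a `2α`-approximation for Max `k`-Sum. -/
theorem stmt_13 {V : Type*} [Fintype V] [DecidableEq V]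
    (N k c : ℕ) (hcard : Fintype.card V = N) (hNkc : N = k * c) (heven : Even c)
    (w : V → V → ℝ)
    (hnonneg : ∀ x y, 0 ≤ w x y)
    (hsymm : ∀ x y, w x y = w y x)
    (hmetric : ∀ x y z : V, x ≠ y → y ≠ z → x ≠ z → w x y ≤ w x z + w z y)
    (σ : Equiv.Perm V) (hinv : ∀ x, σ (σ x) = x) (hfix : ∀ x, σ x ≠ x)
    (σstar : Equiv.Perm V) (hinvstar : ∀ x, σstar (σstar x) = x)
    (hfixstar : ∀ x, σstar x ≠ x)
    (hmax : ∀ τ : Equiv.Perm V, (∀ x, τ (τ x) = x) → (∀ x, τ x ≠ x) →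
      (∑ x, w x (τ x)) / 2 ≤ (∑ x, w x (σstar x)) / 2)
    (α : ℝ) (hα : 1 ≤ α)
    (happrox : (∑ x, w x (σstar x)) / 2 ≤ α * ((∑ x, w x (σ x)) / 2))
    (S : Fin k → Finset V)
    (hSdisj : ∀ i j, i ≠ j → Disjoint (S i) (S j))
    (hScover : ∀ x : V, ∃ i, x ∈ S i)
    (hScard : ∀ i, (S i).card = c)
    (hSsame : ∀ (x : V) (i : Fin k), x ∈ S i → σ x ∈ S i)
    (O : Fin k → Finset V)
    (hOdisj : ∀ i j, i ≠ j → Disjoint (O i) (O j))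
    (hOcover : ∀ x : V, ∃ i, x ∈ O i)
    (hOcard : ∀ i, (O i).card = c) :
    ∑ i, (∑ p ∈ (O i).offDiag, w p.1 p.2) / 2
      ≤ 2 * α * ∑ i, (∑ p ∈ (S i).offDiag, w p.1 p.2) / 2 := by
  classical
  rcases Nat.eq_zero_or_pos c with hc0 | hcpos
  · have hO0 : ∀ i, O i = ∅ := fun i => Finset.card_eq_zero.mp (by rw [hOcard i, hc0])
    have hS0 : ∀ i, S i = ∅ := fun i => Finset.card_eq_zero.mp (by rw [hScard i, hc0])
    simp [hO0, hS0]
  -- the auxiliary "zero-diagonal" weight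
  set u : V → V → ℝ := fun x y => if x = y then 0 else w x y with hu_def
  have hudiag : ∀ x, u x x = 0 := by intro x; simp only [hu_def]; simp
  have huval : ∀ x y, x ≠ y → u x y = w x y := by
    intro x y h; simp only [hu_def]; simp [h]
  have hunn : ∀ x y, 0 ≤ u x y := by
    intro x y; simp only [hu_def]
    by_cases h : x = y <;> simp [h, hnonneg]
  have hutri : ∀ x y a : V, a ≠ x → u x a ≤ u x y + u y a := by
    intro x y a hax
    by_cases hxy : y = x
    · subst hxy; rw [hudiag]; simp
    · by_cases hya : y = a
      · subst hya; rw [hudiag]; simp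
      · rw [huval x a (Ne.symm hax), huval x y (fun h => hxy h.symm), huval y a hya]
        exact hmetric x a y (Ne.symm hax) (fun h => hya h.symm) (fun h => hxy h.symm)
  -- numerology
  have hc2 : 2 ≤ c := by
    rcases heven with ⟨t, ht⟩; omega
  set m := c - 1 with hm_def
  haveI : NeZero m := ⟨by omega⟩
  have hmodd : Odd m := by
    rcases heven with ⟨t, ht⟩
    exact ⟨t - 1, by omega⟩
  have hcardopt : Fintype.card (Option (ZMod m)) = c := by
    rw [Fintype.card_option, ZMod.card]; omega
  -- equivalences with the parts of O
  let eO : ∀ i : Fin k, Option (ZMod m) ≃ ↥(O i) := fun i =>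
    (Fintype.equivFinOfCardEq hcardopt).trans (Finset.equivFinOfCardEq (hOcard i)).symm
  -- index function
  let ind : V → Fin k := fun x => (hOcover x).choose
  have hind : ∀ x, x ∈ O (ind x) := fun x => (hOcover x).choose_spec
  have hind_eq : ∀ (x : V) (i : Fin k), x ∈ O i → ind x = i := by
    intro x i hx
    by_contra hne
    exact Finset.disjoint_left.mp (hOdisj _ _ hne) (hind x) hx
  -- the round-robin matchings transported to V
  let τf : ZMod m → V → V := fun r x =>
    ↑(eO (ind x) (RRmatch r ((eO (ind x)).symm ⟨x, hind x⟩)))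
  have hτstep : ∀ (r : ZMod m) (i : Fin k) (x : V) (hx : x ∈ O i),
      τf r x = ↑(eO i (RRmatch r ((eO i).symm ⟨x, hx⟩))) := by
    intro r i x hx
    have h1 : ind x = i := hind_eq x i hx
    subst h1
    rfl
  have hτmem : ∀ (r : ZMod m) (x : V), τf r x ∈ O (ind x) := fun r x =>
    (eO (ind x) (RRmatch r ((eO (ind x)).symm ⟨x, hind x⟩))).2
  have hτinv : ∀ (r : ZMod m) (x : V), τf r (τf r x) = x := by
    intro r x
    have hx := hind x
    have h2 : τf r x ∈ O (ind x) := hτmem r x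
    rw [hτstep r (ind x) (τf r x) h2]
    have h3 : (⟨τf r x, h2⟩ : ↥(O (ind x)))
        = eO (ind x) (RRmatch r ((eO (ind x)).symm ⟨x, hx⟩)) := by
      apply Subtype.ext
      exact hτstep r (ind x) x hx
    rw [h3, Equiv.symm_apply_apply, RRmatch_invol hmodd, Equiv.apply_symm_apply]
  have hτne : ∀ (r : ZMod m) (x : V), τf r x ≠ x := by
    intro r x h
    have hx := hind x
    have h3 : eO (ind x) (RRmatch r ((eO (ind x)).symm ⟨x, hx⟩)) = ⟨x, hx⟩ := by
      apply Subtype.ext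
      exact h
    have h4 := congrArg (eO (ind x)).symm h3
    rw [Equiv.symm_apply_apply] at h4
    exact RRmatch_ne hmodd r _ h4
  have hτ_perm : ∀ r : ZMod m, ∑ x, w x (τf r x) ≤ ∑ x, w x (σstar x) := by
    intro r
    have h2 := hmax ⟨τf r, τf r, hτinv r, hτinv r⟩ (hτinv r) (hτne r)
    have h3 : (∑ x, w x (τf r x)) / 2 ≤ (∑ x, w x (σstar x)) / 2 := h2
    linarith
  -- identify the part sums of O with round-robin matchings
  have hτeq : ∀ (r : ZMod m) (i : Fin k) (a : Option (ZMod m)),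
      τf r ↑(eO i a) = ↑(eO i (RRmatch r a)) := by
    intro r i a
    rw [hτstep r i ↑(eO i a) (eO i a).2]
    have h5 : (eO i).symm ⟨↑(eO i a), (eO i a).2⟩ = a := by
      rw [show (⟨↑(eO i a), (eO i a).2⟩ : ↥(O i)) = eO i a from rfl]
      exact Equiv.symm_apply_apply _ _
    rw [h5]
  have hOblock : ∀ i : Fin k, ∑ p ∈ (O i).offDiag, w p.1 p.2
      = ∑ r : ZMod m, ∑ a : Option (ZMod m), w ↑(eO i a) ↑(eO i (RRmatch r a)) := by
    intro i
    rw [sum_offDiag_equiv (O i) (eO i) w]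
    exact RR_cover hmodd (fun a b => w ↑(eO i a) ↑(eO i b))
  have hrsum : ∀ r : ZMod m,
      ∑ i : Fin k, ∑ a : Option (ZMod m), w ↑(eO i a) ↑(eO i (RRmatch r a))
        = ∑ x, w x (τf r x) := by
    intro r
    rw [← partition_sum O hOdisj hOcover (fun x => w x (τf r x))]
    apply Finset.sum_congr rfl
    intro i _
    rw [sum_finset_equiv (O i) (eO i) (fun x => w x (τf r x))]
    apply Finset.sum_congr rfl
    intro a _
    rw [hτeq r i a]
  -- upper bound for the O side
  have hTO : ∑ i, ∑ p ∈ (O i).offDiag, w p.1 p.2 ≤ (m : ℝ) * ∑ x, w x (σstar x) := by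
    calc ∑ i, ∑ p ∈ (O i).offDiag, w p.1 p.2
        = ∑ i, ∑ r : ZMod m, ∑ a, w ↑(eO i a) ↑(eO i (RRmatch r a)) :=
          Finset.sum_congr rfl (fun i _ => hOblock i)
      _ = ∑ r : ZMod m, ∑ i, ∑ a, w ↑(eO i a) ↑(eO i (RRmatch r a)) := Finset.sum_comm
      _ = ∑ r : ZMod m, ∑ x, w x (τf r x) := Finset.sum_congr rfl (fun r _ => hrsum r)
      _ ≤ ∑ _r : ZMod m, ∑ x, w x (σstar x) := Finset.sum_le_sum (fun r _ => hτ_perm r)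
      _ = (m : ℝ) * ∑ x, w x (σstar x) := by
          rw [Finset.sum_const, Finset.card_univ, ZMod.card, nsmul_eq_mul]
  -- lower bound for the S side
  have hSlow : ∀ i : Fin k, (c : ℝ) * (∑ x ∈ S i, u x (σ x))
      ≤ 2 * ∑ x ∈ S i, ∑ y ∈ S i, u x y := by
    intro i
    have key : ∑ x ∈ S i, ∑ y ∈ S i, u x (σ x)
        ≤ ∑ x ∈ S i, ∑ y ∈ S i, (u x y + u y (σ x)) := by
      apply Finset.sum_le_sum; intro x _
      apply Finset.sum_le_sum; intro y _
      exact hutri x y (σ x) (hfix x)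
    have lhs_eq : ∑ x ∈ S i, ∑ y ∈ S i, u x (σ x) = (c : ℝ) * ∑ x ∈ S i, u x (σ x) := by
      rw [Finset.mul_sum]
      apply Finset.sum_congr rfl
      intro x _
      rw [Finset.sum_const, hScard i, nsmul_eq_mul]
    have swap_eq : ∑ x ∈ S i, ∑ y ∈ S i, u y (σ x) = ∑ x ∈ S i, ∑ y ∈ S i, u x y := by
      have h1 : ∑ x ∈ S i, (∑ y ∈ S i, u y (σ x)) = ∑ x ∈ S i, ∑ y ∈ S i, u y x := by
        apply Finset.sum_nbij' (i := fun x => σ x) (j := fun x => σ x)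
        · intro a ha; exact hSsame a i ha
        · intro a ha; exact hSsame a i ha
        · intro a _; exact hinv a
        · intro a _; exact hinv a
        · intro a _; rfl
      rw [h1]
      exact Finset.sum_comm
    have rhs_eq : ∑ x ∈ S i, ∑ y ∈ S i, (u x y + u y (σ x))
        = ∑ x ∈ S i, ∑ y ∈ S i, u x y + ∑ x ∈ S i, ∑ y ∈ S i, u y (σ x) := by
      rw [← Finset.sum_add_distrib]
      apply Finset.sum_congr rfl
      intro x _
      rw [← Finset.sum_add_distrib]
    rw [lhs_eq, rhs_eq, swap_eq] at key
    linarith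
  have hAeq : ∑ i, ∑ x ∈ S i, u x (σ x) = ∑ x, w x (σ x) := by
    rw [partition_sum S hSdisj hScover (fun x => u x (σ x))]
    apply Finset.sum_congr rfl
    intro x _
    exact huval x (σ x) (Ne.symm (hfix x))
  have hSblock : ∀ i : Fin k, ∑ p ∈ (S i).offDiag, w p.1 p.2
      = ∑ x ∈ S i, ∑ y ∈ S i, u x y := by
    intro i
    have e1 : ∑ p ∈ (S i).offDiag, w p.1 p.2 = ∑ p ∈ (S i).offDiag, u p.1 p.2 := by
      apply Finset.sum_congr rfl
      intro p hp
      rw [Finset.mem_offDiag] at hp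
      rw [huval p.1 p.2 hp.2.2]
    rw [e1, sum_offDiag_sub]
    apply Finset.sum_congr rfl
    intro x _
    rw [hudiag x]
    ring
  -- assemble
  have hTS : (c : ℝ) * (∑ x, w x (σ x)) ≤ 2 * ∑ i, ∑ p ∈ (S i).offDiag, w p.1 p.2 := by
    have h6 : ∑ i, (c : ℝ) * (∑ x ∈ S i, u x (σ x))
        ≤ ∑ i, 2 * ∑ x ∈ S i, ∑ y ∈ S i, u x y :=
      Finset.sum_le_sum (fun i _ => hSlow i)
    rw [← Finset.mul_sum, ← Finset.mul_sum, hAeq] at h6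
    calc (c : ℝ) * (∑ x, w x (σ x)) ≤ 2 * ∑ i, ∑ x ∈ S i, ∑ y ∈ S i, u x y := h6
      _ = 2 * ∑ i, ∑ p ∈ (S i).offDiag, w p.1 p.2 := by
          rw [Finset.sum_congr rfl (fun i _ => hSblock i)]
  have hA' : ∑ x, w x (σstar x) ≤ α * ∑ x, w x (σ x) := by linarith
  have hAnn : (0:ℝ) ≤ ∑ x, w x (σ x) :=
    Finset.sum_nonneg (fun x _ => hnonneg x (σ x))
  have hαnn : (0:ℝ) ≤ α := by linarith
  have hm_le : (m : ℝ) ≤ (c : ℝ) := by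
    have : m ≤ c := by omega
    exact_mod_cast this
  have hmnn : (0:ℝ) ≤ (m : ℝ) := Nat.cast_nonneg m
  rw [← Finset.sum_div, ← Finset.sum_div]
  have s1 : (m : ℝ) * (∑ x, w x (σstar x)) ≤ (m : ℝ) * (α * ∑ x, w x (σ x)) :=
    mul_le_mul_of_nonneg_left hA' hmnn
  have s2 : (m : ℝ) * (α * ∑ x, w x (σ x)) ≤ (c : ℝ) * (α * ∑ x, w x (σ x)) :=
    mul_le_mul_of_nonneg_right hm_le (mul_nonneg hαnn hAnn)
  have s4 : α * ((c : ℝ) * (∑ x, w x (σ x)))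
      ≤ α * (2 * ∑ i, ∑ p ∈ (S i).offDiag, w p.1 p.2) :=
    mul_le_mul_of_nonneg_left hTS hαnn
  have goal2 : ∑ i, ∑ p ∈ (O i).offDiag, w p.1 p.2
      ≤ 2 * α * ∑ i, ∑ p ∈ (S i).offDiag, w p.1 p.2 := by nlinarith [s1, s2, s4, hTO]
  linarith
end

section
/- Let w be metric weights on a finite set K of 2k points with k ≥ 1, and let M be a perfect matching of K. Then there exists a Hamiltonian path Q on K whose edge set contains all k edges of M and whose total weight satisfies w(Q) ≥ (3/2 − 1/k)·w(M). More precisely, for any ordering e_1,…,e_k of the edges of M there is a Hamiltonian path containing M of weight at least (3/2)·w(M) − w(e_1), obtained by connecting consecutive matching edges via an endpoint's preferred endpoint of the next edge. -/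
open Classical in
noncomputable def orientP {K : Type*} (w : K → K → ℝ) (b : K) (p : K × K) : K × K :=
  if w b p.1 < w b p.2 then p.swap else p

lemma orientP_cases {K : Type*} (w : K → K → ℝ) (b : K) (p : K × K) :
    orientP w b p = p ∨ orientP w b p = p.swap := by
  unfold orientP; split
  · exact Or.inr rfl
  · exact Or.inl rfl

lemma orientP_ge {K : Type*} (w : K → K → ℝ) (b : K) (p : K × K) :
    w b (orientP w b p).2 ≤ w b (orientP w b p).1 := by
  unfold orientP; split
  · simpa using le_of_lt ‹_›
  · simpa using le_of_not_gt ‹_›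

lemma sum_parity_split (a : ℕ → ℝ) (m : ℕ) : ∑ i ∈ Finset.range (2*m+1), a i
    = ∑ j ∈ Finset.range (m+1), a (2*j) + ∑ j ∈ Finset.range m, a (2*j+1) := by
  induction m with
  | zero => simp
  | succ n ih =>
    have h1 : 2*(n+1)+1 = (2*n+1)+1+1 := by ring
    rw [h1, Finset.sum_range_succ, Finset.sum_range_succ, ih,
        Finset.sum_range_succ (fun j => a (2*j)) (n+1),
        Finset.sum_range_succ (fun j => a (2*j+1)) n]
    have h2 : 2*n+1+1 = 2*(n+1) := by ring
    rw [h2]; ring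

lemma swap_mem {α : Type*} (p : α × α) (x : α) :
    (x = p.swap.1 ∨ x = p.swap.2) ↔ (x = p.1 ∨ x = p.2) := by
  simp [or_comm]

lemma construct {K : Type*}
    (k : ℕ) (hk : 1 ≤ k)
    (w : K → K → ℝ)
    (hnonneg : ∀ x y, 0 ≤ w x y)
    (hsymm : ∀ x y, w x y = w y x)
    (hmetric : ∀ x y z : K, x ≠ y → y ≠ z → x ≠ z → w x y ≤ w x z + w z y)
    (f : Fin k → K × K) (hf : IsMatching f)
    (hcover : ∀ v : K, ∃ i, v = (f i).1 ∨ v = (f i).2)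
    (π : Equiv.Perm (Fin k)) :
    ∃ q : ℕ → K,
      (∀ v : K, ∃! i, i < 2 * k ∧ q i = v) ∧
      (∀ j : Fin k, ∃ i, i + 1 < 2 * k ∧
        ((q i = (f j).1 ∧ q (i + 1) = (f j).2) ∨ (q i = (f j).2 ∧ q (i + 1) = (f j).1))) ∧
      (3 / 2) * mWeight w f - w (f (π ⟨0, hk⟩)).1 (f (π ⟨0, hk⟩)).2
        ≤ ∑ i ∈ Finset.range (2 * k - 1), w (q i) (q (i + 1)) := by
  classical
  have hk0 : 0 < k := hk
  obtain ⟨F, hFa⟩ : ∃ F : ℕ → K × K, ∀ a (ha : a < k), F a = f (π ⟨a, ha⟩) :=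
    ⟨fun n => f (π ⟨n % k, Nat.mod_lt n hk0⟩), fun a ha => by
      have h : (⟨a % k, Nat.mod_lt a hk0⟩ : Fin k) = ⟨a, ha⟩ := by
        ext; simp [Nat.mod_eq_of_lt ha]
      exact congrArg (fun i => f (π i)) h⟩
  obtain ⟨g, hg0, hgs⟩ : ∃ g : ℕ → K × K, g 0 = F 0 ∧
      ∀ n, g (n+1) = orientP w (g n).2 (F (n+1)) :=
    ⟨fun n => Nat.rec (F 0) (fun m p => orientP w p.2 (F (m+1))) n, rfl, fun n => rfl⟩
  obtain ⟨q, hqe, hqo⟩ : ∃ q : ℕ → K,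
      (∀ n, n % 2 = 0 → q n = (g (n/2)).1) ∧ (∀ n, n % 2 = 1 → q n = (g (n/2)).2) :=
    ⟨fun n => if n % 2 = 0 then (g (n/2)).1 else (g (n/2)).2,
     fun n h => by simp [h], fun n h => by simp [h]⟩
  have hq1 : ∀ j, q (2*j) = (g j).1 := by
    intro j
    have := hqe (2*j) (by omega)
    rwa [show (2*j)/2 = j by omega] at this
  have hq2 : ∀ j, q (2*j+1) = (g j).2 := by
    intro j
    have := hqo (2*j+1) (by omega)
    rwa [show (2*j+1)/2 = j by omega] at this
  have hgF : ∀ n, g n = F n ∨ g n = (F n).swap := by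
    intro n
    cases n with
    | zero => exact Or.inl hg0
    | succ m => rw [hgs]; exact orientP_cases w _ _
  have hgmem : ∀ a (ha : a < k) (x : K), (x = (g a).1 ∨ x = (g a).2) →
      (x = (f (π ⟨a, ha⟩)).1 ∨ x = (f (π ⟨a, ha⟩)).2) := by
    intro a ha x hx
    rw [← hFa a ha]
    rcases hgF a with h | h
    · rwa [h] at hx
    · rw [h] at hx; exact (swap_mem _ _).mp hx
  have hqmem : ∀ n, q n = (g (n/2)).1 ∨ q n = (g (n/2)).2 := by
    intro n
    rcases Nat.mod_two_eq_zero_or_one n with h | h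
    · exact Or.inl (hqe n h)
    · exact Or.inr (hqo n h)
  have hdisj : ∀ a b (ha : a < k) (hb : b < k), a ≠ b → ∀ x : K,
      (x = (g a).1 ∨ x = (g a).2) → (x = (g b).1 ∨ x = (g b).2) → False := by
    intro a b ha hb hab x hxa hxb
    have hπ : π ⟨a, ha⟩ ≠ π ⟨b, hb⟩ := by
      intro h
      exact hab (by simpa using congrArg Fin.val (π.injective h))
    obtain ⟨h11, h12, h21, h22⟩ := hf.2 _ _ hπ
    have hxa' := hgmem a ha x hxa
    have hxb' := hgmem b hb x hxb
    rcases hxa' with rfl | rfl <;> rcases hxb' with e | e <;> simp_all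
  have hgne : ∀ a (ha : a < k), (g a).1 ≠ (g a).2 := by
    intro a ha
    have h1 := hf.1 (π ⟨a, ha⟩)
    rcases hgF a with h | h <;> rw [h, hFa a ha]
    · exact h1
    · simp only [Prod.fst_swap, Prod.snd_swap]
      exact h1.symm
  have hinj : ∀ i1 i2, i1 < 2*k → i2 < 2*k → q i1 = q i2 → i1 = i2 := by
    intro i1 i2 hi1 hi2 he
    have ha1 : i1 / 2 < k := by omega
    have ha2 : i2 / 2 < k := by omega
    have hm1 := hqmem i1
    have hm2 := hqmem i2
    rw [he] at hm1
    have haa : i1 / 2 = i2 / 2 := by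
      by_contra hne
      exact hdisj _ _ ha1 ha2 hne (q i2) hm1 hm2
    by_cases hp : i1 % 2 = i2 % 2
    · omega
    · exfalso
      have hne := hgne (i1/2) ha1
      rcases Nat.mod_two_eq_zero_or_one i1 with h1 | h1
      · have h2 : i2 % 2 = 1 := by omega
        rw [hqe i1 h1, hqo i2 h2, ← haa] at he
        exact hne he
      · have h2 : i2 % 2 = 0 := by omega
        rw [hqo i1 h1, hqe i2 h2, ← haa] at he
        exact hne he.symm
  refine ⟨q, ?_, ?_, ?_⟩
  · intro v
    obtain ⟨j, hj⟩ := hcover v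
    have ha : ((π.symm j : Fin k) : ℕ) < k := (π.symm j).isLt
    have hFaj : F ((π.symm j : Fin k) : ℕ) = f j := by
      rw [hFa _ ha]
      simp [Fin.eta, Equiv.apply_symm_apply]
    have hv : v = (g ((π.symm j : Fin k) : ℕ)).1 ∨ v = (g ((π.symm j : Fin k) : ℕ)).2 := by
      rcases hgF ((π.symm j : Fin k) : ℕ) with h | h <;> rw [h, hFaj]
      · exact hj
      · exact (swap_mem _ _).mpr hj
    rcases hv with hv | hv
    · refine ⟨2*((π.symm j : Fin k) : ℕ), ⟨by omega, by rw [hq1, ← hv]⟩, ?_⟩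
      rintro i ⟨hilt, hiq⟩
      exact hinj i _ hilt (by omega) (by rw [hiq, hq1, ← hv])
    · refine ⟨2*((π.symm j : Fin k) : ℕ)+1, ⟨by omega, by rw [hq2, ← hv]⟩, ?_⟩
      rintro i ⟨hilt, hiq⟩
      exact hinj i _ hilt (by omega) (by rw [hiq, hq2, ← hv])
  · intro j
    have ha : ((π.symm j : Fin k) : ℕ) < k := (π.symm j).isLt
    have hFaj : F ((π.symm j : Fin k) : ℕ) = f j := by
      rw [hFa _ ha]
      simp [Fin.eta, Equiv.apply_symm_apply]
    refine ⟨2*((π.symm j : Fin k) : ℕ), by omega, ?_⟩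
    have e1 := hq1 ((π.symm j : Fin k) : ℕ)
    have e2 := hq2 ((π.symm j : Fin k) : ℕ)
    rcases hgF ((π.symm j : Fin k) : ℕ) with h | h <;> rw [h, hFaj] at e1 e2
    · exact Or.inl ⟨e1, e2⟩
    · exact Or.inr ⟨by simpa using e1, by simpa using e2⟩
  · -- weight bound
    have h2k : 2 * k - 1 = 2 * (k-1) + 1 := by omega
    have hk1 : k - 1 + 1 = k := by omega
    have hsplit : ∑ i ∈ Finset.range (2*k-1), w (q i) (q (i+1))
        = ∑ j ∈ Finset.range k, w (q (2*j)) (q (2*j+1))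
          + ∑ j ∈ Finset.range (k-1), w (q (2*j+1)) (q (2*j+1+1)) := by
      rw [h2k, sum_parity_split (fun i => w (q i) (q (i+1))) (k-1), hk1]
    rw [hsplit]
    have hT1 : ∑ j ∈ Finset.range k, w (q (2*j)) (q (2*j+1))
        = ∑ j ∈ Finset.range k, w (F j).1 (F j).2 := by
      apply Finset.sum_congr rfl
      intro j hj
      rw [hq1 j, hq2 j]
      rcases hgF j with h | h
      · rw [h]
      · rw [h]
        simp only [Prod.fst_swap, Prod.snd_swap]
        exact hsymm _ _
    have hFW : ∑ j ∈ Finset.range k, w (F j).1 (F j).2 = mWeight w f := by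
      rw [← Fin.sum_univ_eq_sum_range (fun n => w (F n).1 (F n).2) k]
      rw [show (fun j : Fin k => w (F (j : ℕ)).1 (F (j : ℕ)).2)
          = fun j : Fin k => w (f (π j)).1 (f (π j)).2 from ?_]
      · exact Equiv.sum_comp π (fun j => w (f j).1 (f j).2)
      · funext j
        rw [hFa (j : ℕ) j.isLt]
    have hFW' : ∑ j ∈ Finset.range k, w (F j).1 (F j).2
        = ∑ j ∈ Finset.range (k-1), w (F (j+1)).1 (F (j+1)).2 + w (F 0).1 (F 0).2 := by
      conv_lhs => rw [show k = (k-1)+1 by omega]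
      exact Finset.sum_range_succ' _ _
    have hF0 : F 0 = f (π ⟨0, hk⟩) := hFa 0 hk0
    have hT2 : ∀ j ∈ Finset.range (k-1),
        (1/2) * w (F (j+1)).1 (F (j+1)).2 ≤ w (q (2*j+1)) (q (2*j+1+1)) := by
      intro j hj
      rw [Finset.mem_range] at hj
      have hjk : j < k := by omega
      have hj1 : j + 1 < k := by omega
      rw [hq2 j, show 2*j+1+1 = 2*(j+1) by ring, hq1 (j+1)]
      have horient : w (g j).2 (g (j+1)).2 ≤ w (g j).2 (g (j+1)).1 := by
        rw [hgs j]; exact orientP_ge w _ _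
      have hne1 : (g (j+1)).1 ≠ (g j).2 := by
        intro h
        exact hdisj (j+1) j hj1 hjk (by omega) ((g j).2) (Or.inl h.symm) (Or.inr rfl)
      have hne2 : (g (j+1)).2 ≠ (g j).2 := by
        intro h
        exact hdisj (j+1) j hj1 hjk (by omega) ((g j).2) (Or.inr h.symm) (Or.inr rfl)
      have hne3 := hgne (j+1) hj1
      have htri : w (g (j+1)).1 (g (j+1)).2
          ≤ w (g (j+1)).1 ((g j).2) + w ((g j).2) (g (j+1)).2 :=
        hmetric _ _ _ hne3 hne2 hne1
      have hww : w (F (j+1)).1 (F (j+1)).2 = w (g (j+1)).1 (g (j+1)).2 := by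
        rcases hgF (j+1) with h | h
        · rw [h]
        · rw [h]
          simp only [Prod.fst_swap, Prod.snd_swap]
          exact (hsymm _ _).symm
      rw [hww]
      have hsy := hsymm (g (j+1)).1 ((g j).2)
      linarith
    have hsum2 : ∑ j ∈ Finset.range (k-1), (1/2) * w (F (j+1)).1 (F (j+1)).2
        ≤ ∑ j ∈ Finset.range (k-1), w (q (2*j+1)) (q (2*j+1+1)) :=
      Finset.sum_le_sum hT2
    rw [← Finset.mul_sum] at hsum2
    have hW0 : 0 ≤ w (F 0).1 (F 0).2 := hnonneg _ _
    rw [hT1, hFW]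
    rw [hFW, hF0] at hFW'
    rw [hF0] at hW0
    linarith
  done

/-- for metric weights on a set `K` of `2k` points and a perfect matching
`f` of `K`, there is a Hamiltonian path `Q` (an enumeration `q` of the `2k` points)
containing all edges of `M` with `w(Q) ≥ (3/2 − 1/k)·w(M)`; more precisely, for every
ordering of the matching edges (a permutation `π` of `Fin k`, the first edge being
`f (π 0)`) there is a Hamiltonian path containing `M` of weight at least
`(3/2)·w(M) − w(e₁)`. -/
theorem stmt_15 {K : Type*} [Fintype K] [DecidableEq K]
    (k : ℕ) (hk : 1 ≤ k) (hcard : Fintype.card K = 2 * k)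
    (w : K → K → ℝ)
    (hnonneg : ∀ x y, 0 ≤ w x y)
    (hsymm : ∀ x y, w x y = w y x)
    (hmetric : ∀ x y z : K, x ≠ y → y ≠ z → x ≠ z → w x y ≤ w x z + w z y)
    (f : Fin k → K × K) (hf : IsMatching f)
    (hcover : ∀ v : K, ∃ i, v = (f i).1 ∨ v = (f i).2) :
    (∃ q : ℕ → K,
      (∀ v : K, ∃! i, i < 2 * k ∧ q i = v) ∧
      (∀ j : Fin k, ∃ i, i + 1 < 2 * k ∧
        ((q i = (f j).1 ∧ q (i + 1) = (f j).2) ∨ (q i = (f j).2 ∧ q (i + 1) = (f j).1))) ∧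
      (3 / 2 - 1 / (k : ℝ)) * mWeight w f
        ≤ ∑ i ∈ Finset.range (2 * k - 1), w (q i) (q (i + 1))) ∧
    (∀ π : Equiv.Perm (Fin k), ∃ q : ℕ → K,
      (∀ v : K, ∃! i, i < 2 * k ∧ q i = v) ∧
      (∀ j : Fin k, ∃ i, i + 1 < 2 * k ∧
        ((q i = (f j).1 ∧ q (i + 1) = (f j).2) ∨ (q i = (f j).2 ∧ q (i + 1) = (f j).1))) ∧
      (3 / 2) * mWeight w f - w (f (π ⟨0, hk⟩)).1 (f (π ⟨0, hk⟩)).2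
        ≤ ∑ i ∈ Finset.range (2 * k - 1), w (q i) (q (i + 1))) := by
  constructor
  · obtain ⟨j0, -, hj0⟩ := Finset.exists_min_image Finset.univ
      (fun j => w (f j).1 (f j).2) ⟨⟨0, hk⟩, Finset.mem_univ _⟩
    set π : Equiv.Perm (Fin k) := Equiv.swap ⟨0, hk⟩ j0 with hπ
    obtain ⟨q, h1, h2, h3⟩ := construct k hk w hnonneg hsymm hmetric f hf hcover π
    refine ⟨q, h1, h2, ?_⟩
    rw [hπ, Equiv.swap_apply_left] at h3
    have hmin : (k : ℝ) * w (f j0).1 (f j0).2 ≤ mWeight w f := by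
      have := Finset.card_nsmul_le_sum Finset.univ (fun j => w (f j).1 (f j).2)
        (w (f j0).1 (f j0).2) (fun j _ => hj0 j (Finset.mem_univ j))
      simpa [mWeight, nsmul_eq_mul] using this
    have h0k : (0:ℕ) < k := hk
    have hkpos : (0 : ℝ) < (k : ℝ) := by exact_mod_cast h0k
    have hfr : w (f j0).1 (f j0).2 ≤ 1/(k:ℝ) * mWeight w f := by
      rw [div_mul_eq_mul_div, le_div_iff₀ hkpos]
      linarith
    linarith
  · intro π
    exact construct k hk w hnonneg hsymm hmetric f hf hcover π
end

section
/- There exist a strict preference profile P on a set of 8 agents and four nonnegative symmetric weight functions W_1, W_2, W_3, W_4, each consistent with P, whose maximum-weight perfect matchings have values OPT(W_1)=1, OPT(W_2)=2, OPT(W_3)=3, OPT(W_4)=4, such that every perfect matching M of the 8 agents satisfies W_1(M) + W_2(M) + W_3(M) + W_4(M) = 6. Consequently, for every probability distribution p over perfect matchings of the 8 agents, min_{j∈{1,2,3,4}} E_{M∼p}[W_j(M)] / OPT(W_j) ≤ 3/5; i.e., when the hidden weights need not satisfy the triangle inequality, no randomized ordinal algorithm for Maximum Weighted Matching achieves an approximation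 factor better than 5/3. -/
namespace Stmt18Aux

def tier : Fin 8 → ℕ := ![0,0,1,1,2,2,2,2]

def Wn (j : Fin 4) (x y : Fin 8) : ℕ := if tier x + tier y ≤ (j : ℕ) then 1 else 0

def Y2 : Fin 4 → Fin 8 → ℕ :=
  ![![1,1,0,0,0,0,0,0], ![1,1,1,1,0,0,0,0], ![2,2,1,1,0,0,0,0], ![2,2,2,2,0,0,0,0]]

def an (x : Fin 8) : ℕ := 2 - tier x

def c : Fin 4 → Fin 8 → Fin 8 :=
  ![![1,0,3,2,5,4,7,6], ![2,3,0,1,5,4,7,6], ![4,5,3,2,0,1,7,6], ![4,5,6,7,0,1,2,3]]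

lemma L1 : ∀ (j : Fin 4) (x y : Fin 8), 2 * Wn j x y ≤ Y2 j x + Y2 j y := by decide
lemma L2 : ∀ j : Fin 4, (∑ x, Y2 j x) = 2 * ((j : ℕ) + 1) := by decide
lemma L3 : ∀ x y : Fin 8, (∑ j : Fin 4, Wn j x y) = an x + an y := by decide
lemma L4 : (∑ x, an x) = 6 := by decide
lemma L5 : ∀ (j : Fin 4) (i k l : Fin 8), k < l → Wn j i l ≤ Wn j i k := by decide
lemma L6 : ∀ (j : Fin 4) (x y : Fin 8), Wn j x y = Wn j y x := by decide
lemma Lc1 : ∀ (j : Fin 4) (x : Fin 8), c j (c j x) = x := by decide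
lemma Lc2 : ∀ (j : Fin 4) (x : Fin 8), c j x ≠ x := by decide
lemma Lc3 : ∀ j : Fin 4, (∑ x, Wn j x (c j x)) = 2 * ((j : ℕ) + 1) := by decide

/-- The real-valued weight functions. -/
noncomputable def Wr (j : Fin 4) (x y : Fin 8) : ℝ := (Wn j x y : ℝ)

/-- The optimal matchings, as involutive permutations. -/
def σm (j : Fin 4) : Equiv.Perm (Fin 8) := ⟨c j, c j, Lc1 j, Lc1 j⟩

lemma pm_eq (j : Fin 4) (σ : Equiv.Perm (Fin 8)) :
    pmWeight (Wr j) σ = ((∑ x, Wn j x (σ x) : ℕ) : ℝ) / 2 := by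
  simp [pmWeight, Wr]

/-- Every permutation has `Wr j`-weight at most `j+1` (LP-duality certificate `Y2`). -/
lemma pm_le (j : Fin 4) (σ : Equiv.Perm (Fin 8)) :
    pmWeight (Wr j) σ ≤ ((j : ℕ) : ℝ) + 1 := by
  have hterm : ∀ x : Fin 8, (Wn j x (σ x) : ℝ) ≤ ((Y2 j x : ℝ) + (Y2 j (σ x) : ℝ)) / 2 := by
    intro x
    have h := L1 j x (σ x)
    have h' : ((2 * Wn j x (σ x) : ℕ) : ℝ) ≤ ((Y2 j x + Y2 j (σ x) : ℕ) : ℝ) := by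
      exact_mod_cast h
    push_cast at h'
    linarith
  have hsum : (∑ x, (Wn j x (σ x) : ℝ)) ≤ ∑ x, ((Y2 j x : ℝ) + (Y2 j (σ x) : ℝ)) / 2 :=
    Finset.sum_le_sum fun x _ => hterm x
  have hcomp : (∑ x, (Y2 j (σ x) : ℝ)) = ∑ x, (Y2 j x : ℝ) :=
    Equiv.sum_comp σ fun x => (Y2 j x : ℝ)
  have hY : (∑ x, (Y2 j x : ℝ)) = 2 * (((j : ℕ) : ℝ) + 1) := by
    have := L2 j
    have : ((∑ x, Y2 j x : ℕ) : ℝ) = ((2 * ((j : ℕ) + 1) : ℕ) : ℝ) := by exact_mod_cast this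
    push_cast at this
    simpa using this
  have hrhs : (∑ x, ((Y2 j x : ℝ) + (Y2 j (σ x) : ℝ)) / 2) = 2 * (((j : ℕ) : ℝ) + 1) := by
    rw [← Finset.sum_div, Finset.sum_add_distrib, hcomp, hY]
    ring
  have : (∑ x, (Wn j x (σ x) : ℝ)) ≤ 2 * (((j : ℕ) : ℝ) + 1) := by
    calc (∑ x, (Wn j x (σ x) : ℝ)) ≤ _ := hsum
      _ = 2 * (((j : ℕ) : ℝ) + 1) := hrhs
  rw [pm_eq]
  push_cast
  linarith

/-- The four weights of any permutation always sum to `6`. -/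
lemma pm_sum (σ : Equiv.Perm (Fin 8)) : (∑ j : Fin 4, pmWeight (Wr j) σ) = 6 := by
  have hswap : (∑ j : Fin 4, ∑ x, (Wn j x (σ x) : ℝ)) = ∑ x, ∑ j : Fin 4, (Wn j x (σ x) : ℝ) :=
    Finset.sum_comm
  have hinner : ∀ x : Fin 8, (∑ j : Fin 4, (Wn j x (σ x) : ℝ)) = (an x : ℝ) + (an (σ x) : ℝ) := by
    intro x
    have := L3 x (σ x)
    have : ((∑ j : Fin 4, Wn j x (σ x) : ℕ) : ℝ) = ((an x + an (σ x) : ℕ) : ℝ) := by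
      exact_mod_cast this
    push_cast at this
    simpa using this
  have han : (∑ x, (an x : ℝ)) = 6 := by
    have : ((∑ x, an x : ℕ) : ℝ) = ((6 : ℕ) : ℝ) := by exact_mod_cast L4
    push_cast at this
    simpa using this
  have hcomp : (∑ x, (an (σ x) : ℝ)) = ∑ x, (an x : ℝ) :=
    Equiv.sum_comp σ fun x => (an x : ℝ)
  calc (∑ j : Fin 4, pmWeight (Wr j) σ)
      = ∑ j : Fin 4, (∑ x, (Wn j x (σ x) : ℝ)) / 2 := by
        refine Finset.sum_congr rfl fun j _ => ?_
        simp [pmWeight, Wr]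
    _ = (∑ j : Fin 4, ∑ x, (Wn j x (σ x) : ℝ)) / 2 := by rw [Finset.sum_div]
    _ = (∑ x, ∑ j : Fin 4, (Wn j x (σ x) : ℝ)) / 2 := by rw [hswap]
    _ = (∑ x, ((an x : ℝ) + (an (σ x) : ℝ))) / 2 := by
        rw [Finset.sum_congr rfl fun x _ => hinner x]
    _ = 6 := by
        rw [Finset.sum_add_distrib, hcomp, han]
        norm_num

end Stmt18Aux

open Stmt18Aux in
/-- there are a strict preference profile `P` on 8 agents and four
nonnegative symmetric weight functions `W 0, W 1, W 2, W 3` consistent with `P`, with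
optimal perfect-matching values `1, 2, 3, 4`, such that every perfect matching `σ`
satisfies `Σ_j W_j(σ) = 6`; consequently for every probability distribution over perfect
matchings some `j` has expected approximation ratio at most `3/5`: without the triangle
inequality, no randomized ordinal matching algorithm beats `5/3`. -/
theorem stmt_18 :
    ∃ (P : Fin 8 → Fin 8 → Fin 8 → Prop) (W : Fin 4 → Fin 8 → Fin 8 → ℝ),
      IsPrefProfile P ∧
      (∀ j : Fin 4, (∀ x y, 0 ≤ W j x y) ∧ (∀ x y, W j x y = W j y x) ∧
        Consistent P (W j)) ∧
      (∀ j : Fin 4, IsOptVal (W j) (((j : ℕ) : ℝ) + 1)) ∧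
      (∀ σ : Equiv.Perm (Fin 8), IsPM σ → (∑ j : Fin 4, pmWeight (W j) σ) = 6) ∧
      (∀ p : Equiv.Perm (Fin 8) → ℝ,
        (∀ σ, 0 ≤ p σ) → (∀ σ, ¬ IsPM σ → p σ = 0) → (∑ σ, p σ) = 1 →
        ∃ j : Fin 4,
          (∑ σ, p σ * pmWeight (W j) σ) / (((j : ℕ) : ℝ) + 1) ≤ 3 / 5) := by
  refine ⟨fun i j k => j ≠ i ∧ k ≠ i ∧ j < k, Wr, ?_, ?_, ?_, ?_, ?_⟩
  · -- preference profile
    intro i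
    refine ⟨fun j k h => ⟨h.1, h.2.1, ne_of_lt h.2.2⟩, fun j k hj hk hjk => ?_,
      fun j k l h1 h2 => ⟨h1.1, h2.2.1, lt_trans h1.2.2 h2.2.2⟩⟩
    constructor
    · rintro ⟨_, _, hlt⟩ ⟨_, _, hlt'⟩
      exact absurd hlt' (not_lt.mpr hlt.le)
    · intro hn
      refine ⟨hj, hk, ?_⟩
      rcases lt_or_gt_of_ne hjk with h | h
      · exact h
      · exact absurd ⟨hk, hj, h⟩ hn
  · -- nonneg, symmetric, consistent
    intro j
    refine ⟨fun x y => Nat.cast_nonneg _, fun x y => by simp [Wr, L6 j x y], ?_⟩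
    intro i k l h
    exact_mod_cast Nat.cast_le.mpr (L5 j i k l h.2.2)
  · -- optimal values
    intro j
    constructor
    · refine ⟨σm j, ⟨Lc1 j, Lc2 j⟩, ?_⟩
      have : pmWeight (Wr j) (σm j) = ((∑ x, Wn j x (c j x) : ℕ) : ℝ) / 2 := pm_eq j (σm j)
      rw [this, Lc3 j]
      push_cast
      ring
    · exact fun σ _ => pm_le j σ
  · -- sum of weights is 6
    exact fun σ _ => pm_sum σ
  · -- probability part
    intro p hp0 hpm hsum
    by_contra hcon
    push_neg at hcon
    have hj : ∀ j : Fin 4,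
        3 / 5 * (((j : ℕ) : ℝ) + 1) < ∑ σ, p σ * pmWeight (Wr j) σ := by
      intro j
      have h := hcon j
      have hpos : (0 : ℝ) < ((j : ℕ) : ℝ) + 1 := by positivity
      rw [lt_div_iff₀ hpos] at h
      linarith
    have hkey : (∑ j : Fin 4, ∑ σ, p σ * pmWeight (Wr j) σ) = 6 := by
      rw [Finset.sum_comm]
      have hσ : ∀ σ : Equiv.Perm (Fin 8),
          (∑ j : Fin 4, p σ * pmWeight (Wr j) σ) = 6 * p σ := by
        intro σ
        rw [← Finset.mul_sum, pm_sum σ]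
        ring
      rw [Finset.sum_congr rfl fun σ _ => hσ σ, ← Finset.mul_sum, hsum]
      norm_num
    have hlt : (∑ j : Fin 4, 3 / 5 * (((j : ℕ) : ℝ) + 1)) <
        ∑ j : Fin 4, ∑ σ, p σ * pmWeight (Wr j) σ :=
      Finset.sum_lt_sum_of_nonempty Finset.univ_nonempty fun j _ => hj j
    have hval : (∑ j : Fin 4, 3 / 5 * (((j : ℕ) : ℝ) + 1)) = 6 := by
      rw [Fin.sum_univ_four]
      norm_num [show ((0 : Fin 4) : ℕ) = 0 from rfl, show ((1 : Fin 4) : ℕ) = 1 from rfl,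
        show ((2 : Fin 4) : ℕ) = 2 from rfl, show ((3 : Fin 4) : ℕ) = 3 from rfl]
    rw [hval, hkey] at hlt
    exact lt_irrefl _ hlt
end

section
/- Let V be a finite set, let w be a nonnegative symmetric weight function on pairs of distinct points of V, and let α be a real number with 1/3 ≤ α ≤ 1/2. Suppose w satisfies the α-weighted friendship property: w(i,k) ≥ α·(w(i,j) + w(j,k)) for all distinct i,j,k ∈ V. Then w satisfies the triangle inequality: w(i,j) ≤ w(i,k) + w(j,k) for all distinct i,j,k ∈ V. -/
/-- if a nonnegative symmetric weight function `w` on a finite set `V`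
satisfies the `α`-weighted friendship property `w(i,k) ≥ α·(w(i,j) + w(j,k))` for some
`α ∈ [1/3, 1/2]`, then `w` satisfies the triangle inequality. -/
theorem stmt_19 {V : Type*} [Fintype V]
    (w : V → V → ℝ)
    (hnonneg : ∀ x y, 0 ≤ w x y)
    (hsymm : ∀ x y, w x y = w y x)
    (α : ℝ) (hα1 : 1 / 3 ≤ α) (hα2 : α ≤ 1 / 2)
    (hfriend : ∀ i j k : V, i ≠ j → j ≠ k → i ≠ k → α * (w i j + w j k) ≤ w i k) :
    ∀ i j k : V, i ≠ j → j ≠ k → i ≠ k → w i j ≤ w i k + w j k := by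
  intro i j k hij hjk hik
  have h1 := hfriend i j k hij hjk hik
  have h2 := hfriend j i k (Ne.symm hij) hik hjk
  have hs := hsymm i j
  have hn := hnonneg i j
  nlinarith [hnonneg i k, hnonneg j k]
end
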